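/- arXiv:math/9807084 — 9 statements merged into one kernel-verified Lean document; each statement's English description precedes it below -/
import Mathlib

section
/- Suppose Condition 1.5 holds with constant k, and suppose ρ is bounded by a constant d, i.e. ρ(μ,ν) ≤ d for all μ, ν ∈ S. Then ‖ã‖~ ≤ k·d·L~(ã) for every ã ∈ ℒ~. -/
open scoped ENNReal NNReal Topology

/- STATEMENT 2 (second half of Proposition 1.6): if Condition 1.5 holds with
constant `k` (`‖a‖ ≤ k · sup_{μ ∈ S} |μ a|` for `a ∈ ℒ`) and `ρ` is bounded by
`d`, then the quotient norm of `ã` in `ℒ/K` is at most `k·d·L~(ã)`, i.e.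
`‖Submodule.Quotient.mk a‖ ≤ k·d·L a` for all `a ∈ ℒ`. -/
theorem statement2
    {𝕜 : Type*} [RCLike 𝕜]
    {A : Type*} [NormedAddCommGroup A] [NormedSpace 𝕜 A]
    (ℒ : Submodule 𝕜 A) (L : A → ℝ)
    (hL_nonneg : ∀ a ∈ ℒ, 0 ≤ L a)
    (hL_add : ∀ a ∈ ℒ, ∀ b ∈ ℒ, L (a + b) ≤ L a + L b)
    (hL_smul : ∀ (c : 𝕜), ∀ a ∈ ℒ, L (c • a) = ‖c‖ * L a)
    (K : Submodule 𝕜 A) (hK : (K : Set A) = {a | a ∈ ℒ ∧ L a = 0})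
    (hKne : K ≠ ⊥)
    (η : K →L[𝕜] 𝕜) (hη : ‖η‖ = 1)
    (S : Set (A →L[𝕜] 𝕜))
    (hS : S = {μ | (∀ a : K, μ (a : A) = η a) ∧ ‖μ‖ = 1})
    (hsep : ∀ μ ∈ S, ∀ ν ∈ S, μ ≠ ν → ∃ a ∈ ℒ, μ a ≠ ν a)
    (ρ : S → S → ℝ≥0∞)
    (hρ : ∀ μ ν : S,
      ρ μ ν = ⨆ a ∈ {a | a ∈ ℒ ∧ L a ≤ 1}, (‖μ.1 a - ν.1 a‖₊ : ℝ≥0∞))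
    (k : ℝ) (hcond : ∀ a ∈ ℒ, ‖a‖ ≤ k * ⨆ μ : S, ‖μ.1 a‖)
    (d : ℝ) (hd : 0 ≤ d)
    (hbound : ∀ μ ν : S, ρ μ ν ≤ ENNReal.ofReal d) :
    ∀ a ∈ ℒ, ‖(Submodule.Quotient.mk a : A ⧸ K)‖ ≤ k * d * L a := by
  -- preliminary facts
  have hSmem : ∀ f : A →L[𝕜] 𝕜, f ∈ S → (∀ a : K, f (a : A) = η a) := by
    intro f hf
    rw [hS] at hf
    exact hf.1
  have hKsubL : ∀ x ∈ K, x ∈ ℒ := by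
    intro x hx
    have : x ∈ (K : Set A) := hx
    rw [hK] at this
    exact this.1
  -- key estimate: |μ x - ν x| ≤ d * L x for x ∈ ℒ
  have key : ∀ (μ ν : S), ∀ x ∈ ℒ, ‖μ.1 x - ν.1 x‖ ≤ d * L x := by
    intro μ ν x hx
    rcases eq_or_lt_of_le (hL_nonneg x hx) with h0 | hpos
    · -- L x = 0, so x ∈ K and μ x = ν x
      have hxK : x ∈ K := by
        have : x ∈ (K : Set A) := by rw [hK]; exact ⟨hx, h0.symm⟩
        exact this
      have h1 := hSmem μ.1 μ.2 ⟨x, hxK⟩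
      have h2 := hSmem ν.1 ν.2 ⟨x, hxK⟩
      simp only at h1 h2
      rw [h1, h2, sub_self, norm_zero, ← h0, mul_zero]
    · -- L x > 0, scale x
      set t : 𝕜 := (((L x)⁻¹ : ℝ) : 𝕜)
      have hmem : t • x ∈ {a | a ∈ ℒ ∧ L a ≤ 1} := by
        refine ⟨ℒ.smul_mem t hx, ?_⟩
        rw [hL_smul t x hx]
        have hnt : ‖t‖ = (L x)⁻¹ := by
          rw [RCLike.norm_ofReal, abs_of_nonneg (inv_nonneg.2 (hL_nonneg x hx))]
        rw [hnt, inv_mul_cancel₀ (ne_of_gt hpos)]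
      have hle : (‖μ.1 (t • x) - ν.1 (t • x)‖₊ : ℝ≥0∞) ≤ ρ μ ν := by
        rw [hρ]
        exact le_iSup₂_of_le (t • x) hmem le_rfl
      have hle2 : ENNReal.ofReal ‖μ.1 (t • x) - ν.1 (t • x)‖ ≤ ENNReal.ofReal d := by
        rw [ofReal_norm, enorm_eq_nnnorm]
        exact hle.trans (hbound μ ν)
      have hle3 : ‖μ.1 (t • x) - ν.1 (t • x)‖ ≤ d :=
        (ENNReal.ofReal_le_ofReal_iff hd).1 hle2
      have hcomp : ‖μ.1 (t • x) - ν.1 (t • x)‖ = (L x)⁻¹ * ‖μ.1 x - ν.1 x‖ := by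
        rw [map_smul, map_smul, ← smul_sub, norm_smul]
        congr 1
        rw [RCLike.norm_ofReal, abs_of_nonneg (inv_nonneg.2 (hL_nonneg x hx))]
      rw [hcomp] at hle3
      calc ‖μ.1 x - ν.1 x‖ = L x * ((L x)⁻¹ * ‖μ.1 x - ν.1 x‖) := by
              field_simp
        _ ≤ L x * d := by
              exact mul_le_mul_of_nonneg_left hle3 (hL_nonneg x hx)
        _ = d * L x := mul_comm _ _
  -- get a nonzero element of K
  obtain ⟨c₀, hc₀K, hc₀ne⟩ := Submodule.exists_mem_ne_zero_of_ne_bot hKne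
  have hc₀L : c₀ ∈ ℒ := hKsubL c₀ hc₀K
  -- sup nonneg
  have hsup_nonneg : ∀ x : A, 0 ≤ ⨆ μ : S, ‖μ.1 x‖ :=
    fun x => Real.iSup_nonneg fun μ => norm_nonneg _
  -- k > 0
  have hk : 0 < k := by
    have h1 : 0 < ‖c₀‖ := norm_pos_iff.2 hc₀ne
    have h2 := hcond c₀ hc₀L
    nlinarith [hsup_nonneg c₀]
  -- S is nonempty
  have hSne : S.Nonempty := by
    by_contra h
    rw [Set.not_nonempty_iff_eq_empty] at h
    have : IsEmpty S := by rw [h]; exact Set.isEmpty_coe_sort.2 rfl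
    have h2 := hcond c₀ hc₀L
    rw [Real.iSup_of_isEmpty] at h2
    have : (0:ℝ) < ‖c₀‖ := norm_pos_iff.2 hc₀ne
    nlinarith
  obtain ⟨ν₀, hν₀⟩ := hSne
  -- η ≠ 0
  have hηne : ∃ c : K, η c ≠ 0 := by
    by_contra h
    push_neg at h
    have h2 : ‖η‖ ≤ 0 := η.opNorm_le_bound le_rfl fun c => by simp [h c]
    rw [hη] at h2
    linarith
  obtain ⟨c, hc⟩ := hηne
  -- the normalized element of K
  set e : A := (η c)⁻¹ • (c : A) with he
  have heK : e ∈ K := K.smul_mem _ c.2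
  have heL : e ∈ ℒ := hKsubL e heK
  have hμe : ∀ μ ∈ S, μ e = 1 := by
    intro μ hμ
    have := hSmem μ hμ c
    rw [he, map_smul, smul_eq_mul, this, inv_mul_cancel₀ hc]
  -- main argument
  intro a ha
  set b : A := a - (ν₀ a) • e with hb
  have hbL : b ∈ ℒ := ℒ.sub_mem ha (ℒ.smul_mem _ heL)
  have hmk : (Submodule.Quotient.mk a : A ⧸ K) = Submodule.Quotient.mk b := by
    rw [Submodule.Quotient.eq]
    simpa [hb] using K.smul_mem (ν₀ a) heK
  have hμb : ∀ μ : S, μ.1 b = μ.1 a - ν₀ a := by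
    intro μ
    rw [hb, map_sub, map_smul, smul_eq_mul, hμe μ.1 μ.2, mul_one]
  have hsup : (⨆ μ : S, ‖μ.1 b‖) ≤ d * L a := by
    apply Real.iSup_le _ (mul_nonneg hd (hL_nonneg a ha))
    intro μ
    rw [hμb μ]
    exact key μ ⟨ν₀, hν₀⟩ a ha
  calc ‖(Submodule.Quotient.mk a : A ⧸ K)‖
      = ‖(Submodule.Quotient.mk b : A ⧸ K)‖ := by rw [hmk]
    _ ≤ ‖b‖ := Submodule.Quotient.norm_mk_le K b
    _ ≤ k * ⨆ μ : S, ‖μ.1 b‖ := hcond b hbL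
    _ ≤ k * (d * L a) := mul_le_mul_of_nonneg_left hsup hk.le
    _ = k * d * L a := (mul_assoc _ _ _).symm
end

section
/- Let ℒ₁ = {a ∈ ℒ : L(a) ≤ 1}. If the image of ℒ₁ in ℒ~ is totally bounded for the quotient norm ‖·‖~, then the ρ-topology on S agrees with the weak-* topology on S. -/
open scoped ENNReal NNReal Topology

/- STATEMENT 3 (first half of Theorem 1.8): if the image of
`ℒ₁ = {a ∈ ℒ | L a ≤ 1}` in `ℒ/K ⊆ A ⧸ K` is totally bounded for the quotient
norm, then the `ρ`-topology on `S` agrees with the weak-* topology. -/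
theorem statement3
    {𝕜 : Type*} [RCLike 𝕜]
    {A : Type*} [NormedAddCommGroup A] [NormedSpace 𝕜 A]
    (ℒ : Submodule 𝕜 A) (L : A → ℝ)
    (hL_nonneg : ∀ a ∈ ℒ, 0 ≤ L a)
    (hL_add : ∀ a ∈ ℒ, ∀ b ∈ ℒ, L (a + b) ≤ L a + L b)
    (hL_smul : ∀ (c : 𝕜), ∀ a ∈ ℒ, L (c • a) = ‖c‖ * L a)
    (K : Submodule 𝕜 A) (hK : (K : Set A) = {a | a ∈ ℒ ∧ L a = 0})
    (hKne : K ≠ ⊥)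
    (η : K →L[𝕜] 𝕜) (hη : ‖η‖ = 1)
    (S : Set (A →L[𝕜] 𝕜))
    (hS : S = {μ | (∀ a : K, μ (a : A) = η a) ∧ ‖μ‖ = 1})
    (hsep : ∀ μ ∈ S, ∀ ν ∈ S, μ ≠ ν → ∃ a ∈ ℒ, μ a ≠ ν a)
    (ρ : S → S → ℝ≥0∞)
    (hρ : ∀ μ ν : S,
      ρ μ ν = ⨆ a ∈ {a | a ∈ ℒ ∧ L a ≤ 1}, (‖μ.1 a - ν.1 a‖₊ : ℝ≥0∞))
    (weakTop rhoTop : TopologicalSpace S)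
    (hweak : weakTop = TopologicalSpace.induced
      (fun μ : S => (fun a => μ.1 a : A → 𝕜)) Pi.topologicalSpace)
    (hrho : rhoTop = TopologicalSpace.generateFrom
      {U : Set S | ∃ (μ : S) (ε : ℝ≥0∞), 0 < ε ∧ U = {ν | ρ μ ν < ε}})
    (htb : TotallyBounded
      ((fun a => (Submodule.Quotient.mk a : A ⧸ K)) '' {a | a ∈ ℒ ∧ L a ≤ 1})) :
    rhoTop = weakTop := by
  haveI : ProperSpace 𝕜 := FiniteDimensional.proper_rclike 𝕜 𝕜
  -- basic facts about elements of S
  have hSmem : ∀ μ : S, (∀ a : K, μ.1 (a : A) = η a) ∧ ‖μ.1‖ = 1 := by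
    intro μ
    have h : μ.1 ∈ {μ : A →L[𝕜] 𝕜 | (∀ a : K, μ (a : A) = η a) ∧ ‖μ‖ = 1} := by
      rw [← hS]; exact μ.2
    exact h
  have hSK : ∀ (μ ν : S), ∀ a ∈ K, μ.1 a = ν.1 a := by
    intro μ ν a ha
    have h1 := (hSmem μ).1 ⟨a, ha⟩
    have h2 := (hSmem ν).1 ⟨a, ha⟩
    simp only at h1 h2
    rw [h1, h2]
  -- basic facts about ρ
  have hρ_le : ∀ (μ ν : S) (a : A), a ∈ ℒ → L a ≤ 1 →
      (‖μ.1 a - ν.1 a‖₊ : ℝ≥0∞) ≤ ρ μ ν := by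
    intro μ ν a ha hL1
    rw [hρ]
    exact le_iSup₂_of_le a ⟨ha, hL1⟩ le_rfl
  have hρ_self : ∀ μ : S, ρ μ μ = 0 := by
    intro μ; rw [hρ]; simp
  have hρ_symm : ∀ μ ν : S, ρ μ ν = ρ ν μ := by
    intro μ ν
    rw [hρ, hρ]
    congr 1; ext a; congr 1; ext ha
    rw [← neg_sub, nnnorm_neg]
  have hρ_tri : ∀ μ κ ν : S, ρ μ ν ≤ ρ μ κ + ρ κ ν := by
    intro μ κ ν
    rw [hρ μ ν]
    refine iSup₂_le fun a ha => ?_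
    calc (‖μ.1 a - ν.1 a‖₊ : ℝ≥0∞)
        ≤ (‖μ.1 a - κ.1 a‖₊ : ℝ≥0∞) + (‖κ.1 a - ν.1 a‖₊ : ℝ≥0∞) := by
          simp only [← enorm_eq_nnnorm, ← edist_eq_enorm_sub]
          exact edist_triangle _ _ _
      _ ≤ ρ μ κ + ρ κ ν :=
          add_le_add (hρ_le μ κ a ha.1 ha.2) (hρ_le κ ν a ha.1 ha.2)
  have hρ_pos : ∀ μ ν : S, μ ≠ ν → 0 < ρ μ ν := by
    intro μ ν hne
    obtain ⟨a, haℒ, hane⟩ := hsep μ.1 μ.2 ν.1 ν.2 (fun h => hne (Subtype.ext h))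
    have hLa : 0 < L a := by
      rcases lt_or_eq_of_le (hL_nonneg a haℒ) with h | h
      · exact h
      · exfalso
        apply hane
        apply hSK μ ν a
        rw [← SetLike.mem_coe, hK]
        exact ⟨haℒ, h.symm⟩
    set c : 𝕜 := ((((L a)⁻¹ : ℝ)) : 𝕜) with hc
    have hb : c • a ∈ ℒ := ℒ.smul_mem _ haℒ
    have hLb : L (c • a) ≤ 1 := by
      rw [hL_smul c a haℒ]
      have : ‖c‖ = (L a)⁻¹ := by
        rw [RCLike.norm_ofReal, abs_of_pos (inv_pos.mpr hLa)]
      rw [this, inv_mul_cancel₀ (ne_of_gt hLa)]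
    have hne' : μ.1 (c • a) - ν.1 (c • a) ≠ 0 := by
      rw [map_smul, map_smul, ← smul_sub]
      refine smul_ne_zero ?_ (sub_ne_zero.mpr hane)
      simp only [c, ne_eq, RCLike.ofReal_eq_zero, inv_eq_zero]
      exact ne_of_gt hLa
    calc (0 : ℝ≥0∞) < (‖μ.1 (c • a) - ν.1 (c • a)‖₊ : ℝ≥0∞) := by
          simpa using hne'
      _ ≤ ρ μ ν := hρ_le μ ν _ hb hLb
  -- Direction A: the weak-* topology is finer than the ρ-topology
  subst hweak hrho
  have h_wle : TopologicalSpace.induced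
        (fun μ : S => (fun a => μ.1 a : A → 𝕜)) Pi.topologicalSpace
      ≤ TopologicalSpace.generateFrom
        {U : Set S | ∃ (μ : S) (ε : ℝ≥0∞), 0 < ε ∧ U = {ν | ρ μ ν < ε}} := by
    letI : TopologicalSpace S := TopologicalSpace.induced
      (fun μ : S => (fun a => μ.1 a : A → 𝕜)) Pi.topologicalSpace
    refine le_generateFrom ?_
    rintro U ⟨μ, ε, hε, rfl⟩
    rw [isOpen_iff_mem_nhds]
    intro ν₀ hν₀
    have hν₀' : ρ μ ν₀ < ε := hν₀
    set d : ℝ≥0∞ := ε - ρ μ ν₀ with hd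
    have hd0 : 0 < d := tsub_pos_of_lt hν₀'
    set c' : ℝ≥0∞ := min d 1 with hc'
    have hc0 : 0 < c' := lt_min hd0 zero_lt_one
    have hcne : c' ≠ ∞ := ne_top_of_le_ne_top ENNReal.one_ne_top (min_le_right _ _)
    have hct : 0 < c'.toReal := ENNReal.toReal_pos hc0.ne' hcne
    set δ : ℝ := c'.toReal / 4 with hδdef
    have hδ : 0 < δ := by positivity
    obtain ⟨t, hts, htf, hcover⟩ := EMetric.totallyBounded_iff'.mp htb
      (ENNReal.ofReal δ) (by simp [ENNReal.ofReal_pos, hδ])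
    have hrep : ∀ y ∈ t, ∃ a, (a ∈ ℒ ∧ L a ≤ 1) ∧
        (Submodule.Quotient.mk a : A ⧸ K) = y := fun y hy => hts hy
    choose! rep hrepmem hrepeq using hrep
    refine mem_nhds_iff.mpr
      ⟨{ν : S | ∀ y ∈ t, ‖ν.1 (rep y) - ν₀.1 (rep y)‖ < δ}, ?_, ?_, ?_⟩
    · -- the weak neighbourhood is contained in the ρ-ball
      intro ν hν
      have key : ρ ν₀ ν ≤ ENNReal.ofReal (3 * δ) := by
        rw [hρ]
        refine iSup₂_le fun a ha => ?_
        obtain ⟨haℒ, haL⟩ := ha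
        have hmem : (Submodule.Quotient.mk a : A ⧸ K)
            ∈ ⋃ y ∈ t, Metric.eball y (ENNReal.ofReal δ) :=
          hcover ⟨a, ⟨haℒ, haL⟩, rfl⟩
        rw [Set.mem_iUnion₂] at hmem
        obtain ⟨y, hy, hball⟩ := hmem
        rw [Metric.mem_eball, edist_lt_ofReal, dist_eq_norm, ← hrepeq y hy,
          ← Submodule.Quotient.mk_sub] at hball
        -- hball : ‖mk (a - rep y)‖ < δ
        obtain ⟨m, hmk, hmnorm⟩ := Submodule.Quotient.norm_mk_lt
          (Submodule.Quotient.mk (a - rep y) : A ⧸ K)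
          (sub_pos.mpr hball)
        have hmδ : ‖m‖ < δ := by
          have := hmnorm; linarith
        have hkK : a - rep y - m ∈ K := by
          have h1 : m - (a - rep y) ∈ K := (Submodule.Quotient.eq K).mp hmk
          have h2 := K.neg_mem h1
          simpa [neg_sub] using h2
        have hkeq : ν₀.1 (a - rep y - m) = ν.1 (a - rep y - m) :=
          hSK ν₀ ν _ hkK
        have hdecomp : ν₀.1 a - ν.1 a =
            (ν₀.1 m - ν.1 m) + (ν₀.1 (rep y) - ν.1 (rep y)) := by
          have ha' : a = m + rep y + (a - rep y - m) := by abel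
          calc ν₀.1 a - ν.1 a
              = ν₀.1 (m + rep y + (a - rep y - m))
                - ν.1 (m + rep y + (a - rep y - m)) := by rw [← ha']
            _ = (ν₀.1 m - ν.1 m) + (ν₀.1 (rep y) - ν.1 (rep y))
                + (ν₀.1 (a - rep y - m) - ν.1 (a - rep y - m)) := by
                  simp only [map_add]; ring
            _ = (ν₀.1 m - ν.1 m) + (ν₀.1 (rep y) - ν.1 (rep y)) := by
                  rw [hkeq]; ring
        have hb1 : ‖ν₀.1 m‖ ≤ ‖m‖ := by
          have := ν₀.1.le_opNorm m
          rwa [(hSmem ν₀).2, one_mul] at this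
        have hb2 : ‖ν.1 m‖ ≤ ‖m‖ := by
          have := ν.1.le_opNorm m
          rwa [(hSmem ν).2, one_mul] at this
        have hb3 : ‖ν.1 (rep y) - ν₀.1 (rep y)‖ < δ := hν y hy
        have hnorm : ‖ν₀.1 a - ν.1 a‖ ≤ 3 * δ := by
          rw [hdecomp]
          calc ‖(ν₀.1 m - ν.1 m) + (ν₀.1 (rep y) - ν.1 (rep y))‖
              ≤ ‖ν₀.1 m - ν.1 m‖ + ‖ν₀.1 (rep y) - ν.1 (rep y)‖ := norm_add_le _ _
            _ ≤ (‖ν₀.1 m‖ + ‖ν.1 m‖) + ‖ν₀.1 (rep y) - ν.1 (rep y)‖ := by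
                gcongr; exact norm_sub_le _ _
            _ ≤ (δ + δ) + δ := by
                have h4 : ‖ν₀.1 (rep y) - ν.1 (rep y)‖ < δ := by
                  rwa [norm_sub_rev]
                have h5 : ‖ν₀.1 m‖ < δ := lt_of_le_of_lt hb1 hmδ
                have h6 : ‖ν.1 m‖ < δ := lt_of_le_of_lt hb2 hmδ
                linarith
            _ = 3 * δ := by ring
        calc (‖ν₀.1 a - ν.1 a‖₊ : ℝ≥0∞) = ENNReal.ofReal ‖ν₀.1 a - ν.1 a‖ :=
              (ofReal_norm _).symm
          _ ≤ ENNReal.ofReal (3 * δ) := ENNReal.ofReal_le_ofReal hnorm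
      have h3δ : ENNReal.ofReal (3 * δ) < c' := by
        have h7 : 3 * δ < c'.toReal := by rw [hδdef]; linarith
        calc ENNReal.ofReal (3 * δ) < ENNReal.ofReal c'.toReal :=
              (ENNReal.ofReal_lt_ofReal_iff hct).mpr h7
          _ = c' := ENNReal.ofReal_toReal hcne
      show ρ μ ν < ε
      calc ρ μ ν ≤ ρ μ ν₀ + ρ ν₀ ν := hρ_tri _ _ _
        _ ≤ ρ μ ν₀ + ENNReal.ofReal (3 * δ) := add_le_add_right key _
        _ < ρ μ ν₀ + c' := ENNReal.add_lt_add_left hν₀'.ne_top h3δ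
        _ ≤ ρ μ ν₀ + d := add_le_add_right (min_le_left _ _) _
        _ = ε := by rw [hd]; exact add_tsub_cancel_of_le hν₀'.le
    · -- openness of the neighbourhood
      have heq : {ν : S | ∀ y ∈ t, ‖ν.1 (rep y) - ν₀.1 (rep y)‖ < δ}
          = ⋂ y ∈ t, {ν : S | ‖ν.1 (rep y) - ν₀.1 (rep y)‖ < δ} := by
        ext ν; simp
      rw [heq]
      refine htf.isOpen_biInter fun y hy => ?_
      have hcont : Continuous fun ν : S => ν.1 (rep y) :=
        (continuous_apply (rep y)).comp continuous_induced_dom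
      have heq2 : {ν : S | ‖ν.1 (rep y) - ν₀.1 (rep y)‖ < δ}
          = (fun ν : S => ν.1 (rep y)) ⁻¹' Metric.ball (ν₀.1 (rep y)) δ := by
        ext ν; simp [Metric.mem_ball, dist_eq_norm]
      rw [heq2]
      exact Metric.isOpen_ball.preimage hcont
    · intro y hy; simpa using hδ
  -- Compactness of S in the weak-* topology (Banach-Alaoglu)
  have hcomp : @CompactSpace S (TopologicalSpace.induced
      (fun μ : S => (fun a => μ.1 a : A → 𝕜)) Pi.topologicalSpace) := by
    letI : TopologicalSpace S := TopologicalSpace.induced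
      (fun μ : S => (fun a => μ.1 a : A → 𝕜)) Pi.topologicalSpace
    clear this
    set g : S → WeakDual 𝕜 A := fun μ => μ.1 with hg
    have hTeq : (TopologicalSpace.induced
        (fun μ : S => (fun a => μ.1 a : A → 𝕜)) Pi.topologicalSpace)
        = TopologicalSpace.induced g (inferInstance : TopologicalSpace (WeakDual 𝕜 A)) := by
      rw [show (inferInstance : TopologicalSpace (WeakDual 𝕜 A))
        = TopologicalSpace.induced
            (fun v : WeakDual 𝕜 A => (fun a => v a : A → 𝕜))
            Pi.topologicalSpace from rfl, induced_compose]
      rfl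
    rw [hTeq]
    letI : TopologicalSpace S := TopologicalSpace.induced g
      (inferInstance : TopologicalSpace (WeakDual 𝕜 A))
    have hind : Topology.IsInducing g := ⟨rfl⟩
    have hC : IsClosed {v : WeakDual 𝕜 A | ∀ a : K, v (a : A) = η a} := by
      have : {v : WeakDual 𝕜 A | ∀ a : K, v (a : A) = η a}
          = ⋂ a : K, {v : WeakDual 𝕜 A | v (a : A) = η a} := by
        ext v; simp
      rw [this]
      exact isClosed_iInter fun a =>
        isClosed_eq (WeakDual.eval_continuous (a : A)) continuous_const
    have hB : IsCompact (WeakDual.toStrongDual ⁻¹'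
        Metric.closedBall (0 : StrongDual 𝕜 A) 1) :=
      WeakDual.isCompact_closedBall (𝕜 := 𝕜) (E := A) 0 1
    have hrange : Set.range g = (WeakDual.toStrongDual ⁻¹'
        Metric.closedBall (0 : StrongDual 𝕜 A) 1)
        ∩ {v : WeakDual 𝕜 A | ∀ a : K, v (a : A) = η a} := by
      ext v
      constructor
      · rintro ⟨μ, rfl⟩
        refine ⟨?_, (hSmem μ).1⟩
        simp only [Set.mem_preimage, Metric.mem_closedBall, dist_zero_right]
        exact le_of_eq (hSmem μ).2
      · rintro ⟨h1, h2⟩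
        simp only [Set.mem_preimage, Metric.mem_closedBall, dist_zero_right] at h1
        have hge : (1 : ℝ) ≤ ‖WeakDual.toStrongDual v‖ := by
          rw [← hη]
          refine ContinuousLinearMap.opNorm_le_bound _ (norm_nonneg _) fun a => ?_
          rw [← h2 a]
          exact (WeakDual.toStrongDual v).le_opNorm (a : A)
        have hvS : (v : A →L[𝕜] 𝕜) ∈ S := by
          rw [hS]
          exact ⟨h2, le_antisymm h1 hge⟩
        exact ⟨⟨v, hvS⟩, rfl⟩
    have hcpt : IsCompact (Set.range g) := by
      rw [hrange]
      exact hB.inter_right hC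
    constructor
    rw [hind.isCompact_iff, Set.image_univ]
    exact hcpt
  -- Hausdorffness of the ρ-topology
  have hT2 : @T2Space S (TopologicalSpace.generateFrom
      {U : Set S | ∃ (μ : S) (ε : ℝ≥0∞), 0 < ε ∧ U = {ν | ρ μ ν < ε}}) := by
    letI : TopologicalSpace S := TopologicalSpace.generateFrom
      {U : Set S | ∃ (μ : S) (ε : ℝ≥0∞), 0 < ε ∧ U = {ν | ρ μ ν < ε}}
    constructor
    intro μ ν hne
    set r : ℝ≥0∞ := ρ μ ν with hr
    have hrpos : 0 < r := hρ_pos μ ν hne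
    set ε : ℝ≥0∞ := min (r / 2) 1 with hεdef
    have hεpos : 0 < ε := by
      refine lt_min ?_ zero_lt_one
      exact ENNReal.div_pos hrpos.ne' ENNReal.ofNat_ne_top
    refine ⟨{κ | ρ μ κ < ε}, {κ | ρ ν κ < ε}, ?_, ?_, ?_, ?_, ?_⟩
    · exact TopologicalSpace.isOpen_generateFrom_of_mem ⟨μ, ε, hεpos, rfl⟩
    · exact TopologicalSpace.isOpen_generateFrom_of_mem ⟨ν, ε, hεpos, rfl⟩
    · show ρ μ μ < ε; rw [hρ_self]; exact hεpos
    · show ρ ν ν < ε; rw [hρ_self]; exact hεpos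
    · rw [Set.disjoint_left]
      rintro κ (hκ1 : ρ μ κ < ε) (hκ2 : ρ ν κ < ε)
      have hsum : r < ε + ε := by
        calc r ≤ ρ μ κ + ρ κ ν := hρ_tri _ _ _
          _ = ρ μ κ + ρ ν κ := by rw [hρ_symm κ ν]
          _ < ε + ε := ENNReal.add_lt_add hκ1 hκ2
      have hεε : ε + ε ≤ r := by
        rcases eq_or_ne r ⊤ with hrt | hrt
        · calc ε + ε ≤ 1 + 1 := add_le_add (min_le_right _ _) (min_le_right _ _)
            _ ≤ ⊤ := le_top
            _ = r := hrt.symm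
        · calc ε + ε ≤ r / 2 + r / 2 :=
              add_le_add (min_le_left _ _) (min_le_left _ _)
            _ = r := ENNReal.add_halves r
      exact absurd (hsum.trans_le hεε) (lt_irrefl r)
  -- Combine: compact ≤ Hausdorff forces equality
  refine le_antisymm ?_ h_wle
  rw [TopologicalSpace.le_def]
  intro U hU
  have h1 : @IsClosed S (TopologicalSpace.induced
      (fun μ : S => (fun a => μ.1 a : A → 𝕜)) Pi.topologicalSpace) Uᶜ := by
    letI := TopologicalSpace.induced
      (fun μ : S => (fun a => μ.1 a : A → 𝕜)) Pi.topologicalSpace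
    exact isClosed_compl_iff.mpr hU
  have h2 : @IsCompact S (TopologicalSpace.induced
      (fun μ : S => (fun a => μ.1 a : A → 𝕜)) Pi.topologicalSpace) Uᶜ := by
    letI := TopologicalSpace.induced
      (fun μ : S => (fun a => μ.1 a : A → 𝕜)) Pi.topologicalSpace
    haveI := hcomp
    exact h1.isCompact
  have hid : @Continuous S S
      (TopologicalSpace.induced
        (fun μ : S => (fun a => μ.1 a : A → 𝕜)) Pi.topologicalSpace)
      (TopologicalSpace.generateFrom
        {U : Set S | ∃ (μ : S) (ε : ℝ≥0∞), 0 < ε ∧ U = {ν | ρ μ ν < ε}})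
      id := continuous_id_of_le h_wle
  have h3 : @IsCompact S (TopologicalSpace.generateFrom
      {U : Set S | ∃ (μ : S) (ε : ℝ≥0∞), 0 < ε ∧ U = {ν | ρ μ ν < ε}}) Uᶜ := by
    have := @IsCompact.image S S
      (TopologicalSpace.induced
        (fun μ : S => (fun a => μ.1 a : A → 𝕜)) Pi.topologicalSpace)
      (TopologicalSpace.generateFrom
        {U : Set S | ∃ (μ : S) (ε : ℝ≥0∞), 0 < ε ∧ U = {ν | ρ μ ν < ε}})
      Uᶜ id h2 hid
    simpa using this
  have h4 : @IsClosed S (TopologicalSpace.generateFrom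
      {U : Set S | ∃ (μ : S) (ε : ℝ≥0∞), 0 < ε ∧ U = {ν | ρ μ ν < ε}}) Uᶜ := by
    letI := TopologicalSpace.generateFrom
      {U : Set S | ∃ (μ : S) (ε : ℝ≥0∞), 0 < ε ∧ U = {ν | ρ μ ν < ε}}
    haveI := hT2
    exact h3.isClosed
  letI := TopologicalSpace.generateFrom
    {U : Set S | ∃ (μ : S) (ε : ℝ≥0∞), 0 < ε ∧ U = {ν | ρ μ ν < ε}}
  exact isClosed_compl_iff.mp h4
end

section
/- Suppose Condition 1.5 holds and the ρ-topology on S agrees with the weak-* topology on S. Then the image of ℒ₁ = {a ∈ ℒ : L(a) ≤ 1} in ℒ~ is totally bounded for the quotient norm ‖·‖~. -/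
open scoped ENNReal NNReal Topology

theorem statement4
    {𝕜 : Type*} [RCLike 𝕜]
    {A : Type*} [NormedAddCommGroup A] [NormedSpace 𝕜 A]
    (ℒ : Submodule 𝕜 A) (L : A → ℝ)
    (hL_nonneg : ∀ a ∈ ℒ, 0 ≤ L a)
    (hL_add : ∀ a ∈ ℒ, ∀ b ∈ ℒ, L (a + b) ≤ L a + L b)
    (hL_smul : ∀ (c : 𝕜), ∀ a ∈ ℒ, L (c • a) = ‖c‖ * L a)
    (K : Submodule 𝕜 A) (hK : (K : Set A) = {a | a ∈ ℒ ∧ L a = 0})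
    (hKne : K ≠ ⊥)
    (η : K →L[𝕜] 𝕜) (hη : ‖η‖ = 1)
    (S : Set (A →L[𝕜] 𝕜))
    (hS : S = {μ | (∀ a : K, μ (a : A) = η a) ∧ ‖μ‖ = 1})
    (hsep : ∀ μ ∈ S, ∀ ν ∈ S, μ ≠ ν → ∃ a ∈ ℒ, μ a ≠ ν a)
    (ρ : S → S → ℝ≥0∞)
    (hρ : ∀ μ ν : S,
      ρ μ ν = ⨆ a ∈ {a | a ∈ ℒ ∧ L a ≤ 1}, (‖μ.1 a - ν.1 a‖₊ : ℝ≥0∞))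
    (weakTop rhoTop : TopologicalSpace S)
    (hweak : weakTop = TopologicalSpace.induced
      (fun μ : S => (fun a => μ.1 a : A → 𝕜)) Pi.topologicalSpace)
    (hrho : rhoTop = TopologicalSpace.generateFrom
      {U : Set S | ∃ (μ : S) (ε : ℝ≥0∞), 0 < ε ∧ U = {ν | ρ μ ν < ε}})
    (k : ℝ) (hcond : ∀ a ∈ ℒ, ‖a‖ ≤ k * ⨆ μ : S, ‖μ.1 a‖)
    (htop : rhoTop = weakTop) :
    TotallyBounded
      ((fun a => (Submodule.Quotient.mk a : A ⧸ K)) '' {a | a ∈ ℒ ∧ L a ≤ 1}) := by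
  classical
  -- ℒ₁ notation
  set ℒ₁ : Set A := {a | a ∈ ℒ ∧ L a ≤ 1} with hℒ₁
  -- Step A: a positive constant
  set k' : ℝ := max k 1 with hk'def
  have hk' : 0 < k' := lt_of_lt_of_le one_pos (le_max_right _ _)
  have hsupnn : ∀ a : A, (0:ℝ) ≤ ⨆ μ : S, ‖μ.1 a‖ :=
    fun a => Real.iSup_nonneg fun μ => norm_nonneg _
  have hcond' : ∀ a ∈ ℒ, ‖a‖ ≤ k' * ⨆ μ : S, ‖μ.1 a‖ := by
    intro a ha
    exact (hcond a ha).trans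
      (mul_le_mul_of_nonneg_right (le_max_left _ _) (hsupnn a))
  -- Step B: membership facts for S
  have hSnorm_ge : ∀ μ : A →L[𝕜] 𝕜, (∀ a : K, μ (a : A) = η a) → 1 ≤ ‖μ‖ := by
    intro μ hμ
    rw [← hη]
    refine ContinuousLinearMap.opNorm_le_bound η (norm_nonneg μ) fun x => ?_
    rw [← hμ x]
    exact μ.le_opNorm x
  have hmemS : ∀ μ : A →L[𝕜] 𝕜, (∀ a : K, μ (a : A) = η a) → ‖μ‖ ≤ 1 → μ ∈ S := by
    intro μ h1 h2
    rw [hS]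
    exact ⟨h1, le_antisymm h2 (hSnorm_ge μ h1)⟩
  have hSmem : ∀ μ ∈ S, (∀ a : K, μ (a : A) = η a) ∧ ‖μ‖ = 1 := by
    intro μ hμ; rwa [hS] at hμ
  -- Step C: a base point μ₀ ∈ S
  obtain ⟨μ₀, hμ₀η, hμ₀n⟩ := exists_extension_norm_eq (K : Subspace 𝕜 A) η
  have hμ₀S : μ₀ ∈ S := hmemS μ₀ hμ₀η (by rw [hμ₀n, hη])
  set μ₀' : S := ⟨μ₀, hμ₀S⟩ with hμ₀'def
  -- Step D: convexity of S
  have hconv : ∀ μ ∈ S, ∀ ν ∈ S, ∀ s : ℝ, 0 ≤ s → s ≤ 1 →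
      (((1 - s : ℝ) : 𝕜) • μ + ((s : ℝ) : 𝕜) • ν) ∈ S := by
    intro μ hμ ν hν s hs0 hs1
    obtain ⟨hμK, hμn⟩ := hSmem μ hμ
    obtain ⟨hνK, hνn⟩ := hSmem ν hν
    refine hmemS _ (fun a => ?_) ?_
    · simp only [ContinuousLinearMap.add_apply, ContinuousLinearMap.coe_smul',
        Pi.smul_apply, hμK a, hνK a, smul_eq_mul]
      rw [← add_mul]
      norm_cast
      norm_num
    · refine (norm_add_le _ _).trans ?_
      show ‖((1 - s : ℝ) : 𝕜) • μ‖ + ‖((s : ℝ) : 𝕜) • ν‖ ≤ 1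
      have e1 := ContinuousLinearMap.opNorm_smul_le (((1 - s : ℝ) : 𝕜)) μ
      have e2 := ContinuousLinearMap.opNorm_smul_le (((s : ℝ) : 𝕜)) ν
      rw [hμn, RCLike.norm_ofReal, mul_one,
        abs_of_nonneg (by linarith : (0:ℝ) ≤ 1 - s)] at e1
      rw [hνn, RCLike.norm_ofReal, mul_one, abs_of_nonneg hs0] at e2
      linarith
  -- Step E: facts about K and η
  have hKsub : (K : Set A) ⊆ ℒ := by rw [hK]; exact fun b hb => hb.1
  have hKL : ∀ b ∈ K, L b = 0 := by
    intro b hb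
    have : b ∈ (K : Set A) := hb
    rw [hK] at this; exact this.2
  have hη0 : ∃ x : K, η x ≠ 0 := by
    by_contra h
    push_neg at h
    have : η = 0 := by ext x; simp [h x]
    rw [this, ContinuousLinearMap.opNorm_zero] at hη; exact one_ne_zero hη.symm
  obtain ⟨x, hx⟩ := hη0
  -- Step F: the key quotient-norm estimate
  have hquot : ∀ c ∈ ℒ, ∀ M : ℝ, (∀ μ ∈ S, ‖μ c - μ₀ c‖ ≤ M) →
      ‖(Submodule.Quotient.mk c : A ⧸ K)‖ ≤ k' * M := by
    intro c hc M hM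
    set d : 𝕜 := μ₀ c / η x with hddef
    set b : A := d • (x : A) with hbdef
    have hbK : b ∈ K := K.smul_mem d x.2
    have hμb : ∀ μ ∈ S, μ b = μ₀ c := by
      intro μ hμ
      have h1 : μ b = η (d • x) := by
        rw [hbdef, ← Submodule.coe_smul]
        exact (hSmem μ hμ).1 (d • x)
      rw [h1, map_smul, smul_eq_mul, hddef, div_mul_cancel₀ _ hx]
    have hmk : (Submodule.Quotient.mk c : A ⧸ K) = Submodule.Quotient.mk (c - b) := by
      rw [eq_comm, Submodule.Quotient.eq]
      simpa using K.neg_mem hbK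
    rw [hmk]
    refine (Submodule.Quotient.norm_mk_le _ _).trans ?_
    refine (hcond' (c - b) (ℒ.sub_mem hc (hKsub hbK))).trans ?_
    have hM0 : 0 ≤ M := by
      have := hM μ₀ hμ₀S; simpa using this
    refine mul_le_mul_of_nonneg_left ?_ (le_of_lt hk')
    refine Real.iSup_le (fun μ => ?_) hM0
    rw [map_sub, hμb μ.1 μ.2]
    exact hM μ.1 μ.2
  -- Step G: basic facts about ρ
  have hρ_le : ∀ (μ ν : S) (a : A), a ∈ ℒ → L a ≤ 1 →
      (‖μ.1 a - ν.1 a‖₊ : ℝ≥0∞) ≤ ρ μ ν := by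
    intro μ ν a ha hLa
    rw [hρ]
    exact le_iSup₂ (f := fun a (_ : a ∈ ℒ₁) => (‖μ.1 a - ν.1 a‖₊ : ℝ≥0∞)) a ⟨ha, hLa⟩
  have hρ_self : ∀ μ : S, ρ μ μ = 0 := by
    intro μ; rw [hρ]; simp
  -- Step H: compactness of S for rhoTop
  let Sw : Set (WeakDual 𝕜 A) := S
  have hSwc : IsCompact Sw := by
    have hsub : Sw ⊆ WeakDual.toStrongDual ⁻¹' Metric.closedBall 0 1 := by
      intro μ hμ
      have := (hSmem μ hμ).2
      simp [Metric.mem_closedBall, dist_zero_right, this]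
      exact this.le
    have hclosed : IsClosed Sw := by
      have : Sw = (⋂ a : K, {μ : WeakDual 𝕜 A | μ (a : A) = η a}) ∩
          (WeakDual.toStrongDual ⁻¹' Metric.closedBall 0 1) := by
        ext μ
        constructor
        · intro hμ
          exact ⟨Set.mem_iInter.mpr fun a => (hSmem μ hμ).1 a, hsub hμ⟩
        · rintro ⟨h1, h2⟩
          refine hmemS μ (fun a => Set.mem_iInter.mp h1 a) ?_
          exact (by simpa [Metric.mem_closedBall, dist_zero_right] using h2 :
            ‖WeakDual.toStrongDual μ‖ ≤ 1)
      rw [this]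
      refine IsClosed.inter (isClosed_iInter fun a => ?_)
        (WeakDual.isClosed_closedBall 0 1)
      exact isClosed_eq (WeakDual.eval_continuous (a : A)) continuous_const
    exact (WeakDual.isCompact_closedBall (0 : StrongDual 𝕜 A) 1).of_isClosed_subset
      hclosed hsub
  have hCS : @CompactSpace S rhoTop := by
    have h2 := (@isCompact_iff_compactSpace (WeakDual 𝕜 A)
      (inferInstance : TopologicalSpace (WeakDual 𝕜 A)) Sw).mp hSwc
    have heq : rhoTop = (@instTopologicalSpaceSubtype (WeakDual 𝕜 A) (· ∈ Sw)
        (inferInstance : TopologicalSpace (WeakDual 𝕜 A))) := by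
      rw [htop, hweak]
      show _ = TopologicalSpace.induced (Subtype.val : Sw → WeakDual 𝕜 A) _
      rw [show (inferInstance : TopologicalSpace (WeakDual 𝕜 A)) =
        TopologicalSpace.induced (fun (x : WeakDual 𝕜 A) (y : A) => topDualPairing 𝕜 A x y)
          Pi.topologicalSpace from rfl, induced_compose]
      rfl
    rw [heq]
    exact h2
  have hcompact : @IsCompact S rhoTop Set.univ := @CompactSpace.isCompact_univ _ rhoTop hCS
  -- ρ-balls are open
  have hball_open : ∀ (ν : S) (ε : ℝ≥0∞), 0 < ε →
      @IsOpen S rhoTop {σ : S | ρ ν σ < ε} := by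
    intro ν ε hε
    rw [hrho]
    exact TopologicalSpace.isOpen_generateFrom_of_mem ⟨ν, ε, hε, rfl⟩
  -- Step I: finiteness of ρ from the base point
  have hfin : ∀ ν : S, ρ μ₀' ν ≠ ⊤ := by
    intro ν hinf
    have hUopen : @IsOpen S rhoTop {σ : S | ρ μ₀' σ < 1} := hball_open μ₀' 1 zero_lt_one
    have hμ₀U : μ₀' ∈ {σ : S | ρ μ₀' σ < 1} := by
      simp only [Set.mem_setOf_eq, hρ_self μ₀']; exact zero_lt_one
    -- the sequence of convex combinations tending to μ₀
    set s : ℕ → ℝ := fun n => ((n : ℝ) + 1)⁻¹ with hsdef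
    have hs_pos : ∀ n, 0 < s n := fun n => by positivity
    have hs_le : ∀ n, s n ≤ 1 := by
      intro n
      rw [hsdef]
      rw [inv_le_one_iff₀]
      right; linarith [Nat.cast_nonneg (α := ℝ) n]
    have hs_tendsto : Filter.Tendsto s Filter.atTop (nhds 0) :=
      tendsto_one_div_add_atTop_nhds_zero_nat.congr (by intro n; rw [hsdef]; ring_nf)
    set f : ℕ → S := fun n =>
      ⟨((1 - s n : ℝ) : 𝕜) • μ₀ + ((s n : ℝ) : 𝕜) • ν.1,
        hconv μ₀ hμ₀S ν.1 ν.2 (s n) (le_of_lt (hs_pos n)) (hs_le n)⟩ with hfdef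
    have htend : Filter.Tendsto f Filter.atTop (@nhds S rhoTop μ₀') := by
      rw [htop, hweak, nhds_induced, Filter.tendsto_comap_iff]
      rw [tendsto_pi_nhds]
      intro a
      have h1 : Filter.Tendsto (fun n => ((s n : ℝ) : 𝕜)) Filter.atTop (nhds 0) := by
        have := (RCLike.continuous_ofReal (K := 𝕜)).tendsto 0
        simpa [Function.comp_def] using this.comp hs_tendsto
      have h2 : Filter.Tendsto (fun n => (1 - ((s n : ℝ) : 𝕜)) * μ₀ a
          + ((s n : ℝ) : 𝕜) * ν.1 a) Filter.atTop (nhds (μ₀ a)) := by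
        have hc1 : Filter.Tendsto (fun _ : ℕ => (1:𝕜)) Filter.atTop (nhds 1) :=
          tendsto_const_nhds
        have hcμ : Filter.Tendsto (fun _ : ℕ => μ₀ a) Filter.atTop (nhds (μ₀ a)) :=
          tendsto_const_nhds
        have hcν : Filter.Tendsto (fun _ : ℕ => ν.1 a) Filter.atTop (nhds (ν.1 a)) :=
          tendsto_const_nhds
        have := ((hc1.sub h1).mul hcμ).add (h1.mul hcν)
        simpa using this
      refine h2.congr (fun n => ?_)
      simp only [Function.comp_apply, hfdef, ContinuousLinearMap.add_apply,
        ContinuousLinearMap.coe_smul', Pi.smul_apply, smul_eq_mul]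
      push_cast
      ring
    have hev : ∀ᶠ n in Filter.atTop, f n ∈ {σ : S | ρ μ₀' σ < 1} :=
      htend.eventually (hUopen.mem_nhds hμ₀U)
    obtain ⟨n, hn⟩ := hev.exists
    -- but ρ μ₀' (f n) = ‖s n‖ * ρ μ₀' ν = ∞
    have hdiff : ∀ a : A, μ₀ a - (f n).1 a = ((s n : ℝ) : 𝕜) * (μ₀ a - ν.1 a) := by
      intro a
      simp only [hfdef, ContinuousLinearMap.add_apply, ContinuousLinearMap.coe_smul',
        Pi.smul_apply, smul_eq_mul]
      push_cast
      ring
    have hscale : ρ μ₀' (f n) = (‖((s n : ℝ) : 𝕜)‖₊ : ℝ≥0∞) * ρ μ₀' ν := by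
      rw [hρ, hρ]
      simp_rw [ENNReal.mul_iSup]
      congr 1
      ext a
      congr 1
      ext ha
      rw [show μ₀'.1 a - (f n).1 a = ((s n : ℝ) : 𝕜) * (μ₀'.1 a - ν.1 a) from hdiff a]
      rw [nnnorm_mul, ENNReal.coe_mul]
    simp only [Set.mem_setOf_eq] at hn
    have hc0 : (‖((s n : ℝ) : 𝕜)‖₊ : ℝ≥0∞) ≠ 0 := by
      simp only [ne_eq, ENNReal.coe_eq_zero, nnnorm_eq_zero]
      intro h
      have h' : s n = 0 := by exact_mod_cast h
      exact absurd h' (ne_of_gt (hs_pos n))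
    rw [hscale, hinf, ENNReal.mul_top hc0] at hn
    exact absurd hn (by simp)
  -- Step J: the ε-net argument
  rw [Metric.totallyBounded_iff]
  intro ε hε
  set δr : ℝ := ε / (8 * k') with hδrdef
  have hδr : 0 < δr := div_pos hε (by positivity)
  set δ : ℝ≥0∞ := ENNReal.ofReal δr with hδdef
  have hδ0 : 0 < δ := ENNReal.ofReal_pos.mpr hδr
  obtain ⟨C, hC⟩ := hcompact.elim_finite_subcover (fun ν : S => {σ : S | ρ ν σ < δ})
    (fun ν => hball_open ν δ hδ0)
    (by intro σ _
        exact Set.mem_iUnion.mpr ⟨σ, by simp only [Set.mem_setOf_eq, hρ_self σ]; exact hδ0⟩)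
  set Φ : A → (C → 𝕜) := fun a (i : C) => μ₀ a - (i : S).1 a with hΦdef
  have hΦbound : ∀ a ∈ ℒ₁, ∀ i : C, ‖Φ a i‖ ≤ (ρ μ₀' (i : S)).toReal := by
    intro a ha i
    have h1 : (‖μ₀'.1 a - (i : S).1 a‖₊ : ℝ≥0∞) ≤ ρ μ₀' (i : S) :=
      hρ_le μ₀' (i : S) a ha.1 ha.2
    have h2 := ENNReal.toReal_mono (hfin (i : S)) h1
    simpa using h2
  have hΦtb : TotallyBounded (Φ '' ℒ₁) := by
    refine TotallyBounded.subset ?_ (IsCompact.totallyBounded (isCompact_univ_pi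
      (fun i : C => isCompact_closedBall (0:𝕜) ((ρ μ₀' (i : S)).toReal))))
    rintro _ ⟨a, ha, rfl⟩
    rw [Set.mem_univ_pi]
    intro i
    rw [Metric.mem_closedBall, dist_zero_right]
    exact hΦbound a ha i
  obtain ⟨t, hts, htfin, htcover⟩ := totallyBounded_iff_subset.mp hΦtb
      {p : (C → 𝕜) × (C → 𝕜) | dist p.1 p.2 < δr} (Metric.dist_mem_uniformity hδr)
  have hrep : ∀ y ∈ t, ∃ a, a ∈ ℒ₁ ∧ Φ a = y := by
    intro y hy
    obtain ⟨a, ha, rfl⟩ := hts hy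
    exact ⟨a, ha, rfl⟩
  set g : (C → 𝕜) → A := fun y => if h : ∃ a, a ∈ ℒ₁ ∧ Φ a = y then h.choose else 0
    with hgdef
  have hg : ∀ y ∈ t, g y ∈ ℒ₁ ∧ Φ (g y) = y := by
    intro y hy
    have h := hrep y hy
    rw [hgdef]
    simp only [dif_pos h]
    exact ⟨h.choose_spec.1, h.choose_spec.2⟩
  refine ⟨(fun y => (Submodule.Quotient.mk (g y) : A ⧸ K)) '' t, htfin.image _, ?_⟩
  rintro _ ⟨a, ha, rfl⟩
  obtain ⟨y, hyt, hdist⟩ := Set.mem_iUnion₂.mp (htcover ⟨a, ha, rfl⟩)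
  obtain ⟨hgy1, hgy2⟩ := hg y hyt
  refine Set.mem_iUnion₂.mpr ⟨Submodule.Quotient.mk (g y), ⟨y, hyt, rfl⟩, ?_⟩
  rw [Metric.mem_ball, dist_eq_norm, ← Submodule.Quotient.mk_sub]
  -- bound on L (a - g y)
  have hc_mem : a - g y ∈ ℒ := ℒ.sub_mem ha.1 hgy1.1
  have hLsub : L (a - g y) ≤ 2 := by
    have hnegmem : -(g y) ∈ ℒ := ℒ.neg_mem hgy1.1
    have hadd := hL_add a ha.1 (-(g y)) hnegmem
    have hneg : L (-(g y)) = L (g y) := by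
      rw [show -(g y) = (-1 : 𝕜) • (g y) from (neg_one_smul 𝕜 (g y)).symm,
        hL_smul _ _ hgy1.1]
      simp
    rw [sub_eq_add_neg]
    calc L (a + -(g y)) ≤ L a + L (-(g y)) := hadd
      _ ≤ 1 + 1 := by rw [hneg]; exact add_le_add ha.2 hgy1.2
      _ = 2 := by norm_num
  -- the estimate for every μ ∈ S
  have hbound : ∀ μ ∈ S, ‖μ (a - g y) - μ₀ (a - g y)‖ ≤ 3 * δr := by
    intro μ hμ
    obtain ⟨i, hiC, hi⟩ := Set.mem_iUnion₂.mp (hC (Set.mem_univ (⟨μ, hμ⟩ : S)))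
    have hi' : ρ i ⟨μ, hμ⟩ < δ := hi
    -- the half element
    have h2ne : ((2:𝕜)) ≠ 0 := two_ne_zero
    set hf : A := ((2:𝕜))⁻¹ • (a - g y) with hhf
    have hhfℒ : hf ∈ ℒ := ℒ.smul_mem _ hc_mem
    have hhfL : L hf ≤ 1 := by
      rw [hhf, hL_smul _ _ hc_mem, norm_inv, RCLike.norm_two]
      linarith
    have hterm1 : ‖μ (a - g y) - i.1 (a - g y)‖ ≤ 2 * δr := by
      have hle := hρ_le i ⟨μ, hμ⟩ hf hhfℒ hhfL
      have hlt : (‖i.1 hf - μ hf‖₊ : ℝ≥0∞) < δ := lt_of_le_of_lt hle hi'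
      have hreal : ‖i.1 hf - μ hf‖ < δr := by
        rw [hδdef] at hlt
        have := (ENNReal.lt_ofReal_iff_toReal_lt (by simp)).mp hlt
        simpa using this
      have hx2 : (2:𝕜) • hf = a - g y := smul_inv_smul₀ h2ne _
      have hsplit : μ (a - g y) - i.1 (a - g y) = (2:𝕜) * (μ hf - i.1 hf) := by
        have e1 : μ hf = (2:𝕜)⁻¹ * μ (a - g y) := by rw [hhf, map_smul, smul_eq_mul]
        have e2 : i.1 hf = (2:𝕜)⁻¹ * i.1 (a - g y) := by rw [hhf, map_smul, smul_eq_mul]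
        rw [e1, e2]
        have : (2:𝕜) * ((2:𝕜)⁻¹ * μ (a - g y) - (2:𝕜)⁻¹ * i.1 (a - g y))
            = ((2:𝕜) * (2:𝕜)⁻¹) * (μ (a - g y) - i.1 (a - g y)) := by ring
        rw [this, mul_inv_cancel₀ h2ne, one_mul]
      rw [hsplit, norm_mul, RCLike.norm_two, ← norm_sub_rev]
      linarith
    have hterm2 : ‖i.1 (a - g y) - μ₀ (a - g y)‖ < δr := by
      have hdist' : dist (Φ a) y < δr := hdist
      rw [← hgy2] at hdist'
      have hco := dist_le_pi_dist (Φ a) (Φ (g y)) (⟨i, hiC⟩ : C)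
      have heqn : ‖i.1 (a - g y) - μ₀ (a - g y)‖
          = dist (Φ a ⟨i, hiC⟩) (Φ (g y) ⟨i, hiC⟩) := by
        rw [dist_eq_norm, ← norm_neg]
        congr 1
        simp only [hΦdef, map_sub]
        ring
      rw [heqn]
      exact lt_of_le_of_lt hco hdist'
    have htri := dist_triangle (μ (a - g y)) (i.1 (a - g y)) (μ₀ (a - g y))
    simp only [dist_eq_norm] at htri
    calc ‖μ (a - g y) - μ₀ (a - g y)‖
        ≤ ‖μ (a - g y) - i.1 (a - g y)‖ + ‖i.1 (a - g y) - μ₀ (a - g y)‖ := htri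
      _ ≤ 2 * δr + δr := add_le_add hterm1 (le_of_lt hterm2)
      _ = 3 * δr := by ring
  have hfinal := hquot (a - g y) hc_mem (3 * δr) hbound
  calc ‖(Submodule.Quotient.mk (a - g y) : A ⧸ K)‖ ≤ k' * (3 * δr) := hfinal
    _ = 3 / 8 * ε := by
        rw [hδrdef]
        field_simp
    _ < ε := by linarith
end

section
/- Suppose that (i) Condition 1.5 holds, (ii) ρ is bounded on S × S, and (iii) the set B₁ = {a ∈ ℒ : L(a) ≤ 1 and ‖a‖ ≤ 1} is totally bounded in A for ‖·‖. Then the ρ-topology on S agrees with the weak-* topology on S. -/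
open scoped ENNReal NNReal Topology

/- STATEMENT 5 (first half of Theorem 1.9): if (i) Condition 1.5 holds,
(ii) `ρ` is bounded, and (iii) `B₁ = {a ∈ ℒ | L a ≤ 1, ‖a‖ ≤ 1}` is totally
bounded in `A`, then the `ρ`-topology on `S` agrees with the weak-* topology. -/
theorem statement5
    {𝕜 : Type*} [RCLike 𝕜]
    {A : Type*} [NormedAddCommGroup A] [NormedSpace 𝕜 A]
    (ℒ : Submodule 𝕜 A) (L : A → ℝ)
    (hL_nonneg : ∀ a ∈ ℒ, 0 ≤ L a)
    (hL_add : ∀ a ∈ ℒ, ∀ b ∈ ℒ, L (a + b) ≤ L a + L b)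
    (hL_smul : ∀ (c : 𝕜), ∀ a ∈ ℒ, L (c • a) = ‖c‖ * L a)
    (K : Submodule 𝕜 A) (hK : (K : Set A) = {a | a ∈ ℒ ∧ L a = 0})
    (hKne : K ≠ ⊥)
    (η : K →L[𝕜] 𝕜) (hη : ‖η‖ = 1)
    (S : Set (A →L[𝕜] 𝕜))
    (hS : S = {μ | (∀ a : K, μ (a : A) = η a) ∧ ‖μ‖ = 1})
    (hsep : ∀ μ ∈ S, ∀ ν ∈ S, μ ≠ ν → ∃ a ∈ ℒ, μ a ≠ ν a)
    (ρ : S → S → ℝ≥0∞)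
    (hρ : ∀ μ ν : S,
      ρ μ ν = ⨆ a ∈ {a | a ∈ ℒ ∧ L a ≤ 1}, (‖μ.1 a - ν.1 a‖₊ : ℝ≥0∞))
    (weakTop rhoTop : TopologicalSpace S)
    (hweak : weakTop = TopologicalSpace.induced
      (fun μ : S => (fun a => μ.1 a : A → 𝕜)) Pi.topologicalSpace)
    (hrho : rhoTop = TopologicalSpace.generateFrom
      {U : Set S | ∃ (μ : S) (ε : ℝ≥0∞), 0 < ε ∧ U = {ν | ρ μ ν < ε}})
    (hcond : ∃ k : ℝ, ∀ a ∈ ℒ, ‖a‖ ≤ k * ⨆ μ : S, ‖μ.1 a‖)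
    (hbdd : ∃ d : ℝ, ∀ μ ν : S, ρ μ ν ≤ ENNReal.ofReal d)
    (htb : TotallyBounded {a | a ∈ ℒ ∧ L a ≤ 1 ∧ ‖a‖ ≤ 1}) :
    rhoTop = weakTop := by
  classical
  -- dispose of the degenerate case where S is empty
  rcases isEmpty_or_nonempty S with hE | hne
  · refine TopologicalSpace.ext_iff.mpr fun s => ?_
    rw [Set.eq_empty_of_isEmpty s]
    exact ⟨fun _ => @isOpen_empty _ weakTop, fun _ => @isOpen_empty _ rhoTop⟩
  -- basic facts about members of S
  have hS1 : ∀ μ : S, ‖μ.1‖ = 1 := by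
    intro μ; exact (hS.subset μ.2).2
  have hSη : ∀ μ : S, ∀ a : K, μ.1 (a : A) = η a := by
    intro μ; exact (hS.subset μ.2).1
  -- symmetry of ρ
  have hsymm : ∀ μ ν : S, ρ μ ν = ρ ν μ := by
    intro μ ν
    rw [hρ, hρ]
    congr 1; ext a; congr 1; ext ha; congr 1
    rw [← neg_sub, nnnorm_neg]
  -- triangle inequality
  have htri : ∀ μ ν σ : S, ρ μ ν ≤ ρ μ σ + ρ σ ν := by
    intro μ ν σ
    rw [hρ μ ν]
    refine iSup₂_le fun a ha => ?_
    calc (‖μ.1 a - ν.1 a‖₊ : ℝ≥0∞) = edist (μ.1 a) (ν.1 a) := by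
            rw [edist_eq_enorm_sub]; rfl
      _ ≤ edist (μ.1 a) (σ.1 a) + edist (σ.1 a) (ν.1 a) := edist_triangle _ _ _
      _ ≤ ρ μ σ + ρ σ ν := by
            gcongr
            · rw [edist_eq_enorm_sub, hρ μ σ]
              exact le_iSup₂ (f := fun a _ => (‖μ.1 a - σ.1 a‖₊ : ℝ≥0∞)) a ha
            · rw [edist_eq_enorm_sub, hρ σ ν]
              exact le_iSup₂ (f := fun a _ => (‖σ.1 a - ν.1 a‖₊ : ℝ≥0∞)) a ha
  -- ρ μ μ = 0
  have hzero : ∀ μ : S, ρ μ μ = 0 := by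
    intro μ; rw [hρ]; simp
  -- ρ μ ν = 0 → μ = ν
  have heq : ∀ μ ν : S, ρ μ ν = 0 → μ = ν := by
    intro μ ν h
    by_contra hne'
    have hμν : μ.1 ≠ ν.1 := fun hh => hne' (Subtype.ext hh)
    obtain ⟨a, haℒ, hane⟩ := hsep μ.1 μ.2 ν.1 ν.2 hμν
    apply hane
    have key : ∀ b ∈ ℒ, L b ≤ 1 → μ.1 b = ν.1 b := by
      intro b hb hLb
      have : (‖μ.1 b - ν.1 b‖₊ : ℝ≥0∞) ≤ ρ μ ν := by
        rw [hρ]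
        exact le_iSup₂ (f := fun a _ => (‖μ.1 a - ν.1 a‖₊ : ℝ≥0∞)) b ⟨hb, hLb⟩
      rw [h, nonpos_iff_eq_zero] at this
      have : ‖μ.1 b - ν.1 b‖₊ = 0 := by exact_mod_cast this
      rw [nnnorm_eq_zero, sub_eq_zero] at this
      exact this
    rcases eq_or_lt_of_le (hL_nonneg a haℒ) with h0 | hpos
    · exact key a haℒ (by rw [← h0]; norm_num)
    · set c : 𝕜 := (((L a)⁻¹ : ℝ) : 𝕜) with hcdef
      have hc : ‖c‖ = (L a)⁻¹ := by
        simp [c, abs_of_pos (inv_pos.mpr hpos)]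
        exact hpos.le
      have hca : L (c • a) ≤ 1 := by
        rw [hL_smul c a haℒ, hc, inv_mul_cancel₀ (ne_of_gt hpos)]
      have := key (c • a) (ℒ.smul_mem c haℒ) hca
      rw [map_smul, map_smul, smul_eq_mul, smul_eq_mul] at this
      have hc0 : c ≠ 0 := by
        simp only [c, ne_eq, RCLike.ofReal_eq_zero]
        exact inv_ne_zero (ne_of_gt hpos)
      exact mul_left_cancel₀ hc0 this
  -- construct e ∈ K with η e = 1 and ‖e‖ ≤ 2
  obtain ⟨x, hx1, hx2⟩ := η.exists_lt_apply_of_lt_opNorm (r := 2⁻¹) (by rw [hη]; norm_num)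
  have hηx0 : η x ≠ 0 := by
    intro h0; rw [h0] at hx2; norm_num at hx2
  set e0 : K := (η x)⁻¹ • x with he0def
  have hηe0 : η e0 = 1 := by
    rw [he0def, map_smul, smul_eq_mul, inv_mul_cancel₀ hηx0]
  have he0n : ‖(e0 : A)‖ ≤ 2 := by
    have h1 : ‖(e0 : A)‖ = ‖η x‖⁻¹ * ‖(x : A)‖ := by
      rw [he0def]
      push_cast
      rw [norm_smul, norm_inv]
    rw [h1]
    have h2 : ‖η x‖⁻¹ ≤ 2 := by
      rw [inv_le_comm₀ (by linarith) (by norm_num)]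
      linarith
    have h3 : ‖(x : A)‖ ≤ 1 := by
      have : ‖(x : A)‖ = ‖x‖ := rfl
      rw [this]; exact hx1.le
    calc ‖η x‖⁻¹ * ‖(x : A)‖ ≤ 2 * 1 := by
          apply mul_le_mul h2 h3 (norm_nonneg _) (by norm_num)
      _ = 2 := by norm_num
  have he0K : (e0 : A) ∈ K := e0.2
  have he0ℒ : (e0 : A) ∈ ℒ := (hK.subset he0K).1
  have hLe0 : L (e0 : A) = 0 := (hK.subset he0K).2
  have hμe : ∀ μ : S, μ.1 (e0 : A) = 1 := by
    intro μ; rw [hSη μ e0, hηe0]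
  -- constants
  obtain ⟨k, hk⟩ := hcond
  obtain ⟨d, hd⟩ := hbdd
  set k0 : ℝ := max k 0 with hk0def
  set d0 : ℝ := max d 0 with hd0def
  set C : ℝ := max (k0 * d0) 1 with hCdef
  have hC1 : (1 : ℝ) ≤ C := le_max_right _ _
  have hC0 : (0 : ℝ) < C := lt_of_lt_of_le one_pos hC1
  -- key approximation lemma
  have hkey : ∀ (μ0 : S) (a : A), a ∈ ℒ → L a ≤ 1 →
      ∃ b : A, b ∈ ℒ ∧ L b ≤ 1 ∧ ‖b‖ ≤ 1 ∧ μ0.1 b = 0 ∧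
        ∀ ν : S, ‖μ0.1 a - ν.1 a‖ = C * ‖ν.1 b - μ0.1 b‖ := by
    intro μ0 a haℒ hLa
    set a' : A := a - μ0.1 a • (e0 : A) with ha'def
    have ha'ℒ : a' ∈ ℒ := ℒ.sub_mem haℒ (ℒ.smul_mem _ he0ℒ)
    have hν' : ∀ ν : S, ν.1 a' = ν.1 a - μ0.1 a := by
      intro ν
      rw [ha'def, map_sub, map_smul, smul_eq_mul, hμe ν, mul_one]
    have hLa' : L a' ≤ 1 := by
      have h1 : a' = a + (-(μ0.1 a)) • (e0 : A) := by
        rw [ha'def, sub_eq_add_neg, ← neg_smul]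
      rw [h1]
      calc L (a + (-(μ0.1 a)) • (e0 : A))
          ≤ L a + L ((-(μ0.1 a)) • (e0 : A)) :=
            hL_add a haℒ _ (ℒ.smul_mem _ he0ℒ)
        _ = L a + ‖-(μ0.1 a)‖ * L (e0 : A) := by rw [hL_smul _ _ he0ℒ]
        _ = L a := by rw [hLe0]; ring
        _ ≤ 1 := hLa
    have hbound : ∀ ν : S, ‖ν.1 a'‖ ≤ d0 := by
      intro ν
      have h1 : (‖ν.1 a - μ0.1 a‖₊ : ℝ≥0∞) ≤ ENNReal.ofReal d := by
        refine le_trans ?_ (hd ν μ0)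
        rw [hρ ν μ0]
        exact le_iSup₂ (f := fun b _ => (‖ν.1 b - μ0.1 b‖₊ : ℝ≥0∞)) a ⟨haℒ, hLa⟩
      have h2 : (‖ν.1 a - μ0.1 a‖₊ : ℝ≥0∞) ≤ ENNReal.ofReal d0 :=
        h1.trans (ENNReal.ofReal_le_ofReal (le_max_left d 0))
      rw [← ENNReal.ofReal_coe_nnreal, coe_nnnorm,
        ENNReal.ofReal_le_ofReal_iff (le_max_right d 0)] at h2
      rw [hν' ν]; exact h2
    have ha'n : ‖a'‖ ≤ k0 * d0 := by
      have hsup0 : (0 : ℝ) ≤ ⨆ ν : S, ‖ν.1 a'‖ :=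
        Real.iSup_nonneg fun ν => norm_nonneg _
      calc ‖a'‖ ≤ k * ⨆ ν : S, ‖ν.1 a'‖ := hk a' ha'ℒ
        _ ≤ k0 * d0 := by
            apply mul_le_mul (le_max_left k 0) (ciSup_le hbound) hsup0 (le_max_right k 0)
    have hCinv : ‖((C⁻¹ : ℝ) : 𝕜)‖ = C⁻¹ := by
      rw [RCLike.norm_ofReal, abs_of_pos (inv_pos.mpr hC0)]
    refine ⟨((C⁻¹ : ℝ) : 𝕜) • a', ℒ.smul_mem _ ha'ℒ, ?_, ?_, ?_, ?_⟩
    · rw [hL_smul _ _ ha'ℒ, hCinv]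
      calc C⁻¹ * L a' ≤ 1 * 1 := by
            apply mul_le_mul _ hLa' (hL_nonneg _ ha'ℒ) (by norm_num)
            rw [inv_le_one_iff₀]; right; exact hC1
        _ = 1 := by norm_num
    · rw [norm_smul, hCinv]
      calc C⁻¹ * ‖a'‖ ≤ C⁻¹ * C := by
            apply mul_le_mul_of_nonneg_left _ (inv_nonneg.mpr hC0.le)
            exact le_trans ha'n (le_max_left _ _)
        _ = 1 := inv_mul_cancel₀ (ne_of_gt hC0)
    · rw [map_smul, smul_eq_mul, hν' μ0, sub_self, mul_zero]
    · intro ν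
      have h1 : μ0.1 (((C⁻¹ : ℝ) : 𝕜) • a') = 0 := by
        rw [map_smul, smul_eq_mul, hν' μ0, sub_self, mul_zero]
      rw [h1, sub_zero, map_smul, smul_eq_mul, norm_mul, hCinv, hν' ν,
        ← norm_sub_rev]
      rw [← mul_assoc, mul_inv_cancel₀ (ne_of_gt hC0), one_mul]
  -- continuity core: ρ-balls contain weak-* neighborhoods
  have hcore : ∀ (μ0 : S) (ε : ℝ≥0∞), 0 < ε →
      ∃ V : Set S, IsOpen[weakTop] V ∧ μ0 ∈ V ∧ ∀ ν ∈ V, ρ μ0 ν < ε := by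
    intro μ0 ε hε
    obtain ⟨r, hr0, hrε⟩ := ENNReal.lt_iff_exists_nnreal_btwn.mp hε
    rw [ENNReal.coe_pos] at hr0
    set δ : ℝ := (r : ℝ) / (4 * C) with hδdef
    have hδ0 : 0 < δ := div_pos (by exact_mod_cast hr0) (by linarith)
    obtain ⟨F, hFfin, hFcov⟩ := Metric.totallyBounded_iff.mp htb δ hδ0
    refine ⟨⋂ y ∈ F, {ν : S | dist (ν.1 y) (μ0.1 y) < δ}, ?_, ?_, ?_⟩
    · rw [hweak]
      letI : TopologicalSpace S := TopologicalSpace.induced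
        (fun μ : S => (fun a => μ.1 a : A → 𝕜)) Pi.topologicalSpace
      refine hFfin.isOpen_biInter fun y hy => ?_
      have hev : Continuous (fun ν : S => ν.1 y) :=
        (continuous_apply y).comp continuous_induced_dom
      exact IsOpen.preimage hev (Metric.isOpen_ball (x := μ0.1 y) (ε := δ))
    · refine Set.mem_iInter₂.mpr fun y hy => ?_
      simp [hδ0]
    · intro ν hν
      rw [Set.mem_iInter₂] at hν
      refine lt_of_le_of_lt ?_ hrε
      rw [hρ μ0 ν]
      refine iSup₂_le fun a ha => ?_
      obtain ⟨haℒ, hLa⟩ := ha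
      obtain ⟨b, hbℒ, hLb, hbn, hb0, hbeq⟩ := hkey μ0 a haℒ hLa
      obtain ⟨y, hyF, hby⟩ := Set.mem_iUnion₂.mp (hFcov ⟨hbℒ, hLb, hbn⟩)
      rw [Metric.mem_ball, dist_eq_norm] at hby
      have h1 : ‖ν.1 b - μ0.1 b‖ ≤ 3 * δ := by
        have e1 : ν.1 b - μ0.1 b =
            ν.1 (b - y) + (ν.1 y - μ0.1 y) + μ0.1 (y - b) := by
          rw [map_sub, map_sub]; ring
        rw [e1]
        have t1 : ‖ν.1 (b - y)‖ ≤ δ := by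
          calc ‖ν.1 (b - y)‖ ≤ ‖ν.1‖ * ‖b - y‖ := ν.1.le_opNorm _
            _ = ‖b - y‖ := by rw [hS1 ν, one_mul]
            _ ≤ δ := hby.le
        have t2 : ‖ν.1 y - μ0.1 y‖ ≤ δ := by
          have := hν y hyF
          rw [Set.mem_setOf_eq, dist_eq_norm] at this
          exact this.le
        have t3 : ‖μ0.1 (y - b)‖ ≤ δ := by
          calc ‖μ0.1 (y - b)‖ ≤ ‖μ0.1‖ * ‖y - b‖ := μ0.1.le_opNorm _
            _ = ‖y - b‖ := by rw [hS1 μ0, one_mul]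
            _ ≤ δ := by rw [norm_sub_rev]; exact hby.le
        calc ‖ν.1 (b - y) + (ν.1 y - μ0.1 y) + μ0.1 (y - b)‖
            ≤ ‖ν.1 (b - y) + (ν.1 y - μ0.1 y)‖ + ‖μ0.1 (y - b)‖ := norm_add_le _ _
          _ ≤ ‖ν.1 (b - y)‖ + ‖ν.1 y - μ0.1 y‖ + ‖μ0.1 (y - b)‖ := by
              have := norm_add_le (ν.1 (b - y)) (ν.1 y - μ0.1 y)
              linarith
          _ ≤ 3 * δ := by linarith
      have h2 : ‖μ0.1 a - ν.1 a‖ ≤ (r : ℝ) := by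
        rw [hbeq ν]
        calc C * ‖ν.1 b - μ0.1 b‖ ≤ C * (3 * δ) :=
              mul_le_mul_of_nonneg_left h1 hC0.le
          _ = 3 / 4 * (r : ℝ) := by
              rw [hδdef]; field_simp
          _ ≤ (r : ℝ) := by
              have : (0 : ℝ) ≤ (r : ℝ) := r.2
              linarith
      have h3 : ‖μ0.1 a - ν.1 a‖₊ ≤ r := by
        rw [← NNReal.coe_le_coe, coe_nnnorm]
        exact h2
      exact_mod_cast h3
  -- easy direction : weakTop ≤ rhoTop
  have hle : weakTop ≤ rhoTop := by
    rw [hrho]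
    refine le_generateFrom ?_
    rintro U ⟨μ, ε, hε, rfl⟩
    rw [@isOpen_iff_forall_mem_open _ weakTop]
    intro ν₀ hν₀
    rw [Set.mem_setOf_eq] at hν₀
    have hεpos : 0 < ε - ρ μ ν₀ := tsub_pos_of_lt hν₀
    obtain ⟨V, hVopen, hVmem, hVsub⟩ := hcore ν₀ (ε - ρ μ ν₀) hεpos
    refine ⟨V, fun ν hν => ?_, hVopen, hVmem⟩
    rw [Set.mem_setOf_eq]
    calc ρ μ ν ≤ ρ μ ν₀ + ρ ν₀ ν := htri μ ν ν₀
      _ < ρ μ ν₀ + (ε - ρ μ ν₀) :=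
          ENNReal.add_lt_add_left (ne_top_of_lt hν₀) (hVsub ν hν)
      _ = ε := add_tsub_cancel_of_le hν₀.le
  -- ρ is finite
  have hfin : ∀ μ ν : S, ρ μ ν ≠ ⊤ :=
    fun μ ν => ne_top_of_le_ne_top ENNReal.ofReal_ne_top (hd μ ν)
  -- T2 for the ρ-topology
  have hT2 : @T2Space S rhoTop := by
    refine @T2Space.mk _ rhoTop fun μ ν hμν => ?_
    have hr0 : ρ μ ν ≠ 0 := fun h0 => hμν (heq μ ν h0)
    refine ⟨{σ | ρ μ σ < ρ μ ν / 2}, {σ | ρ ν σ < ρ μ ν / 2}, ?_, ?_, ?_, ?_, ?_⟩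
    · rw [hrho]
      exact TopologicalSpace.isOpen_generateFrom_of_mem
        ⟨μ, ρ μ ν / 2, ENNReal.half_pos hr0, rfl⟩
    · rw [hrho]
      exact TopologicalSpace.isOpen_generateFrom_of_mem
        ⟨ν, ρ μ ν / 2, ENNReal.half_pos hr0, rfl⟩
    · rw [Set.mem_setOf_eq, hzero μ]
      exact ENNReal.half_pos hr0
    · rw [Set.mem_setOf_eq, hzero ν]
      exact ENNReal.half_pos hr0
    · rw [Set.disjoint_left]
      intro σ h1 h2
      rw [Set.mem_setOf_eq] at h1 h2
      have : ρ μ ν < ρ μ ν := by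
        calc ρ μ ν ≤ ρ μ σ + ρ σ ν := htri μ ν σ
          _ = ρ μ σ + ρ ν σ := by rw [hsymm σ ν]
          _ < ρ μ ν / 2 + ρ μ ν / 2 := ENNReal.add_lt_add h1 h2
          _ = ρ μ ν := ENNReal.add_halves _
      exact absurd this (lt_irrefl _)
  -- compactness of the weak-* topology on S
  have hCclosed : IsClosed {μ : WeakDual 𝕜 A | ∀ a : K, μ (a : A) = η a} := by
    have : {μ : WeakDual 𝕜 A | ∀ a : K, μ (a : A) = η a} =
        ⋂ a : K, {μ : WeakDual 𝕜 A | μ (a : A) = η a} := by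
      ext μ; simp [Set.mem_iInter]
    rw [this]
    exact isClosed_iInter fun a =>
      isClosed_eq (WeakDual.eval_continuous ((a : A))) continuous_const
  have hBcomp : IsCompact
      (WeakDual.toStrongDual ⁻¹' Metric.closedBall (0 : StrongDual 𝕜 A) 1) :=
    WeakDual.isCompact_closedBall (𝕜 := 𝕜) (E := A) 0 1
  have hSWeq : {μ : WeakDual 𝕜 A | μ ∈ S} =
      {μ : WeakDual 𝕜 A | ∀ a : K, μ (a : A) = η a} ∩
        (WeakDual.toStrongDual ⁻¹' Metric.closedBall (0 : StrongDual 𝕜 A) 1) := by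
    ext μ
    constructor
    · intro hμ
      have h1 := (hS.subset hμ)
      refine ⟨h1.1, ?_⟩
      rw [Set.mem_preimage, Metric.mem_closedBall, dist_zero_right]
      exact le_of_eq h1.2
    · rintro ⟨h1, h2⟩
      rw [Set.mem_preimage, Metric.mem_closedBall, dist_zero_right] at h2
      show μ ∈ S
      rw [hS]
      refine ⟨h1, le_antisymm h2 ?_⟩
      rw [← hη]
      refine η.opNorm_le_bound (norm_nonneg _) fun z => ?_
      rw [← h1 z]
      exact (WeakDual.toStrongDual μ).le_opNorm (z : A)
  have hSWcomp : @IsCompact (WeakDual 𝕜 A) (inferInstance : TopologicalSpace (WeakDual 𝕜 A))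
      {μ : WeakDual 𝕜 A | μ ∈ S} := by
    rw [hSWeq]
    exact hBcomp.inter_left hCclosed
  have hCompS : @CompactSpace S weakTop := by
    have hinst : @CompactSpace {μ : WeakDual 𝕜 A // μ ∈ S}
        (@instTopologicalSpaceSubtype (WeakDual 𝕜 A) (fun μ => μ ∈ S)
          (inferInstance : TopologicalSpace (WeakDual 𝕜 A))) :=
      (@isCompact_iff_compactSpace _ (inferInstance : TopologicalSpace (WeakDual 𝕜 A)) _).mp hSWcomp
    have htopeq : weakTop =
        @instTopologicalSpaceSubtype (WeakDual 𝕜 A) (fun μ => μ ∈ S)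
          (inferInstance : TopologicalSpace (WeakDual 𝕜 A)) := by
      rw [hweak]
      show _ = TopologicalSpace.induced _ (TopologicalSpace.induced _ _)
      refine Eq.trans ?_ induced_compose.symm
      rfl
    rw [htopeq]
    exact hinst
  -- hard direction via compactness
  have hge : rhoTop ≤ weakTop := by
    have hcont : Continuous[weakTop, rhoTop] id := continuous_id_iff_le.mpr hle
    have hclosed := @Continuous.isClosedMap S S weakTop rhoTop hCompS hT2 id hcont
    rw [TopologicalSpace.le_def]
    intro U hU
    have h1 : IsClosed[weakTop] Uᶜ := (@isClosed_compl_iff _ weakTop U).mpr hU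
    have h2 := hclosed _ h1
    rw [Set.image_id] at h2
    exact (@isClosed_compl_iff _ rhoTop U).mp h2
  exact le_antisymm hge hle
end

section
/- Suppose Condition 1.5 holds and the ρ-topology on S agrees with the weak-* topology on S. Then ρ is bounded on S × S and the set B₁ = {a ∈ ℒ : L(a) ≤ 1 and ‖a‖ ≤ 1} is totally bounded in A for ‖·‖. -/
open scoped ENNReal NNReal Topology

/- STATEMENT 6 (second half of Theorem 1.9): if Condition 1.5 holds and the
`ρ`-topology agrees with the weak-* topology on `S`, then `ρ` is bounded and
`B₁ = {a ∈ ℒ | L a ≤ 1, ‖a‖ ≤ 1}` is totally bounded in `A`. -/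
theorem statement6
    {𝕜 : Type*} [RCLike 𝕜]
    {A : Type*} [NormedAddCommGroup A] [NormedSpace 𝕜 A]
    (ℒ : Submodule 𝕜 A) (L : A → ℝ)
    (hL_nonneg : ∀ a ∈ ℒ, 0 ≤ L a)
    (hL_add : ∀ a ∈ ℒ, ∀ b ∈ ℒ, L (a + b) ≤ L a + L b)
    (hL_smul : ∀ (c : 𝕜), ∀ a ∈ ℒ, L (c • a) = ‖c‖ * L a)
    (K : Submodule 𝕜 A) (hK : (K : Set A) = {a | a ∈ ℒ ∧ L a = 0})
    (hKne : K ≠ ⊥)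
    (η : K →L[𝕜] 𝕜) (hη : ‖η‖ = 1)
    (S : Set (A →L[𝕜] 𝕜))
    (hS : S = {μ | (∀ a : K, μ (a : A) = η a) ∧ ‖μ‖ = 1})
    (hsep : ∀ μ ∈ S, ∀ ν ∈ S, μ ≠ ν → ∃ a ∈ ℒ, μ a ≠ ν a)
    (ρ : S → S → ℝ≥0∞)
    (hρ : ∀ μ ν : S,
      ρ μ ν = ⨆ a ∈ {a | a ∈ ℒ ∧ L a ≤ 1}, (‖μ.1 a - ν.1 a‖₊ : ℝ≥0∞))
    (weakTop rhoTop : TopologicalSpace S)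
    (hweak : weakTop = TopologicalSpace.induced
      (fun μ : S => (fun a => μ.1 a : A → 𝕜)) Pi.topologicalSpace)
    (hrho : rhoTop = TopologicalSpace.generateFrom
      {U : Set S | ∃ (μ : S) (ε : ℝ≥0∞), 0 < ε ∧ U = {ν | ρ μ ν < ε}})
    (hcond : ∃ k : ℝ, ∀ a ∈ ℒ, ‖a‖ ≤ k * ⨆ μ : S, ‖μ.1 a‖)
    (htop : rhoTop = weakTop) :
    (∃ d : ℝ, ∀ μ ν : S, ρ μ ν ≤ ENNReal.ofReal d) ∧
      TotallyBounded {a | a ∈ ℒ ∧ L a ≤ 1 ∧ ‖a‖ ≤ 1} := by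
  classical
  letI : TopologicalSpace S := weakTop
  have hS' : ∀ z : A →L[𝕜] 𝕜, z ∈ S ↔ (∀ x : K, z (x : A) = η x) ∧ ‖z‖ = 1 := by
    intro z; rw [hS]; rfl
  -- basic facts about ρ
  have hself : ∀ μ : S, ρ μ μ = 0 := by
    intro μ; rw [hρ]; simp
  have hbound : ∀ (μ ν : S) (a : A), a ∈ ℒ → L a ≤ 1 →
      (‖μ.1 a - ν.1 a‖₊ : ℝ≥0∞) ≤ ρ μ ν := by
    intro μ ν a ha hLa
    rw [hρ]
    exact le_iSup₂ (f := fun a (_ : a ∈ {a | a ∈ ℒ ∧ L a ≤ 1}) => (‖μ.1 a - ν.1 a‖₊ : ℝ≥0∞))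
      a ⟨ha, hLa⟩
  have hsymm : ∀ μ ν : S, ρ μ ν = ρ ν μ := by
    intro μ ν; rw [hρ, hρ]
    congr 1; ext a; congr 1; ext ha; rw [← nnnorm_neg]; ring_nf
  have htri : ∀ μ ν κ : S, ρ μ κ ≤ ρ μ ν + ρ ν κ := by
    intro μ ν κ
    rw [hρ μ κ]
    refine iSup₂_le fun a ha => ?_
    calc (‖μ.1 a - κ.1 a‖₊ : ℝ≥0∞)
        ≤ (‖μ.1 a - ν.1 a‖₊ : ℝ≥0∞) + (‖ν.1 a - κ.1 a‖₊ : ℝ≥0∞) := by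
          rw [← ENNReal.coe_add, ENNReal.coe_le_coe]
          have h := dist_triangle (μ.1 a) (ν.1 a) (κ.1 a)
          rw [dist_eq_norm, dist_eq_norm, dist_eq_norm] at h
          exact_mod_cast h
      _ ≤ ρ μ ν + ρ ν κ := add_le_add (hbound μ ν a ha.1 ha.2) (hbound ν κ a ha.1 ha.2)
  -- balls are open in the weak topology
  have hball : ∀ (μ : S) (ε : ℝ≥0∞), 0 < ε → IsOpen {ν | ρ μ ν < ε} := by
    intro μ ε hε
    show @IsOpen S weakTop _
    rw [← htop, hrho]
    exact TopologicalSpace.isOpen_generateFrom_of_mem ⟨μ, ε, hε, rfl⟩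
  -- extension facts
  have hext : ∀ μ : S, ∀ x : K, μ.1 (x : A) = η x := fun μ => ((hS' μ.1).mp μ.2).1
  have hge : ∀ μ : A →L[𝕜] 𝕜, (∀ x : K, μ (x : A) = η x) → 1 ≤ ‖μ‖ := by
    intro μ hextμ
    calc (1 : ℝ) = ‖η‖ := hη.symm
    _ ≤ ‖μ‖ := by
      apply ContinuousLinearMap.opNorm_le_bound _ (norm_nonneg μ)
      intro x
      rw [← hextμ x]
      exact μ.le_opNorm x
  have hnorm1 : ∀ μ : S, ‖μ.1‖ = 1 := fun μ => ((hS' μ.1).mp μ.2).2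
  -- case S empty: contradiction
  by_cases hSne : S.Nonempty
  swap
  · exfalso
    obtain ⟨x, hxK, hx0⟩ := Submodule.ne_bot_iff K |>.mp hKne
    have hxℒ : x ∈ ℒ := by
      have : x ∈ (K : Set A) := hxK
      rw [hK] at this
      exact this.1
    obtain ⟨k, hk⟩ := hcond
    have hE : IsEmpty S := by
      rw [Set.not_nonempty_iff_eq_empty] at hSne
      rw [hSne]; exact Set.isEmpty_coe_sort.mpr rfl
    have := hk x hxℒ
    rw [@Real.iSup_of_isEmpty _ hE] at this
    simp at this
    exact hx0 this
  obtain ⟨μ₀', hμ₀'⟩ := hSne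
  set μ₀ : S := ⟨μ₀', hμ₀'⟩ with hμ₀def
  -- compactness
  have hcptset : @IsCompact (WeakDual 𝕜 A) (inferInstance : TopologicalSpace (WeakDual 𝕜 A)) S := by
    have hSeq : S = {μ : WeakDual 𝕜 A | ∀ a : K, μ (a : A) = η a} ∩
        (WeakDual.toStrongDual ⁻¹' Metric.closedBall 0 1) := by
      rw [hS]
      ext μ
      simp only [Set.mem_setOf_eq, Set.mem_inter_iff, Set.mem_preimage, Metric.mem_closedBall,
        dist_zero_right]
      constructor
      · rintro ⟨h1, h2⟩; exact ⟨h1, show dist (WeakDual.toStrongDual (𝕜 := 𝕜) (E := A) μ) 0 ≤ 1 by rw [dist_zero_right]; exact le_of_eq h2⟩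
      · rintro ⟨h1, h2⟩; exact ⟨h1, le_antisymm (by have h2' : dist (WeakDual.toStrongDual (𝕜 := 𝕜) (E := A) μ) 0 ≤ 1 := h2; rw [dist_zero_right] at h2'; exact h2') (hge μ h1)⟩
    rw [hSeq]
    apply IsCompact.of_isClosed_subset (WeakDual.isCompact_closedBall (0 : StrongDual 𝕜 A) 1)
    · apply IsClosed.inter
      · have h3 : {μ : WeakDual 𝕜 A | ∀ a : K, μ (a : A) = η a} =
            ⋂ a : K, {μ : WeakDual 𝕜 A | μ (a : A) = η a} := by
          ext; simp
        rw [h3]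
        refine isClosed_iInter fun a => isClosed_eq ?_ continuous_const
        exact WeakDual.eval_continuous (a : A)
      · exact WeakDual.isClosed_closedBall 0 1
    · exact Set.inter_subset_right
  have hcpt : CompactSpace S := by
    have h2 : weakTop = TopologicalSpace.induced (Subtype.val : S → WeakDual 𝕜 A)
        (inferInstance : TopologicalSpace (WeakDual 𝕜 A)) := by
      rw [hweak]
      show _ = TopologicalSpace.induced _
        (TopologicalSpace.induced (fun x y => (topDualPairing 𝕜 A) x y) Pi.topologicalSpace)
      rw [induced_compose]
      rfl
    show @CompactSpace S weakTop
    rw [h2]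
    exact (@isCompact_iff_compactSpace (WeakDual 𝕜 A) (inferInstance : TopologicalSpace (WeakDual 𝕜 A)) S).mp hcptset
  -- finiteness of ρ via connectedness of segments
  have hfin : ∀ μ ν : S, ρ μ ν < ⊤ := by
    intro μ ν
    -- the segment
    have hmem : ∀ t : Set.Icc (0:ℝ) 1,
        (((1 - t.1 : ℝ) : 𝕜) • μ.1 + ((t.1 : ℝ) : 𝕜) • ν.1) ∈ S := by
      intro t
      obtain ⟨ht0, ht1⟩ := t.2
      rw [hS']
      have hext' : ∀ x : K, (((1 - t.1 : ℝ) : 𝕜) • μ.1 + ((t.1 : ℝ) : 𝕜) • ν.1) (x : A) = η x := by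
        intro x
        simp only [ContinuousLinearMap.add_apply, ContinuousLinearMap.coe_smul',
          Pi.smul_apply, smul_eq_mul]
        rw [hext μ x, hext ν x]
        have : (((1 - t.1 : ℝ) : 𝕜) + ((t.1 : ℝ) : 𝕜)) = 1 := by push_cast; ring
        calc ((1 - t.1 : ℝ) : 𝕜) * η x + ((t.1 : ℝ) : 𝕜) * η x
            = (((1 - t.1 : ℝ) : 𝕜) + ((t.1 : ℝ) : 𝕜)) * η x := by ring
          _ = η x := by rw [this, one_mul]
      refine ⟨hext', le_antisymm ?_ (hge _ hext')⟩
      calc ‖((1 - t.1 : ℝ) : 𝕜) • μ.1 + ((t.1 : ℝ) : 𝕜) • ν.1‖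
          ≤ ‖((1 - t.1 : ℝ) : 𝕜) • μ.1‖ + ‖((t.1 : ℝ) : 𝕜) • ν.1‖ := norm_add_le _ _
        _ ≤ ‖((1 - t.1 : ℝ) : 𝕜)‖ * ‖μ.1‖ + ‖((t.1 : ℝ) : 𝕜)‖ * ‖ν.1‖ :=
            add_le_add (ContinuousLinearMap.opNorm_smul_le _ _) (ContinuousLinearMap.opNorm_smul_le _ _)
        _ = 1 := by
            rw [hnorm1 μ, hnorm1 ν, RCLike.norm_ofReal, RCLike.norm_ofReal,
              abs_of_nonneg (by linarith : (0:ℝ) ≤ 1 - t.1), abs_of_nonneg ht0]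
            ring
    set f : Set.Icc (0:ℝ) 1 → S :=
      fun t => ⟨((1 - t.1 : ℝ) : 𝕜) • μ.1 + ((t.1 : ℝ) : 𝕜) • ν.1, hmem t⟩ with hfdef
    have hz : (0:ℝ) ∈ Set.Icc (0:ℝ) 1 := by norm_num
    have ho : (1:ℝ) ∈ Set.Icc (0:ℝ) 1 := by norm_num
    have hf0 : f ⟨0, hz⟩ = μ := by
      apply Subtype.ext
      show ((1 - (0:ℝ) : ℝ) : 𝕜) • μ.1 + (((0:ℝ) : ℝ) : 𝕜) • ν.1 = μ.1
      ext x
      simp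
    have hf1 : f ⟨1, ho⟩ = ν := by
      apply Subtype.ext
      show ((1 - (1:ℝ) : ℝ) : 𝕜) • μ.1 + (((1:ℝ) : ℝ) : 𝕜) • ν.1 = ν.1
      ext x
      simp
    have hfc : Continuous f := by
      show @Continuous _ _ _ weakTop f
      rw [hweak]
      apply continuous_induced_rng.mpr
      apply continuous_pi
      intro a
      show Continuous fun t : Set.Icc (0:ℝ) 1 =>
        ((1 - t.1 : ℝ) : 𝕜) * μ.1 a + ((t.1 : ℝ) : 𝕜) * ν.1 a
      fun_prop
    set Cb : Set S := {κ | ρ μ κ < ⊤} with hCbdef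
    have hCbo : IsOpen Cb := by
      have : Cb = ⋃ κ ∈ Cb, {x | ρ κ x < 1} := by
        ext x
        simp only [Set.mem_iUnion, Set.mem_setOf_eq, hCbdef]
        constructor
        · intro hx; exact ⟨x, hx, by rw [hself]; norm_num⟩
        · rintro ⟨κ, hκ, hκx⟩
          exact lt_of_le_of_lt (htri μ κ x) (ENNReal.add_lt_top.mpr ⟨hκ, lt_of_lt_of_le hκx le_top⟩)
      rw [this]
      exact isOpen_biUnion fun κ _ => hball κ 1 (by norm_num)
    have hCbc : IsOpen Cbᶜ := by
      have : Cbᶜ = ⋃ κ ∈ Cbᶜ, {x | ρ κ x < 1} := by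
        ext x
        simp only [Set.mem_iUnion, Set.mem_compl_iff, Set.mem_setOf_eq, hCbdef]
        constructor
        · intro hx; exact ⟨x, hx, by rw [hself]; norm_num⟩
        · rintro ⟨κ, hκ, hκx⟩
          intro hcon
          apply hκ
          calc ρ μ κ ≤ ρ μ x + ρ x κ := htri μ x κ
            _ < ⊤ := ENNReal.add_lt_top.mpr
                ⟨hcon, by rw [hsymm]; exact lt_of_lt_of_le hκx le_top⟩
      rw [this]
      exact isOpen_biUnion fun κ _ => hball κ 1 (by norm_num)
    have hC : IsClopen (f ⁻¹' Cb) := by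
      constructor
      · rw [← isOpen_compl_iff, ← Set.preimage_compl]
        exact hfc.isOpen_preimage _ hCbc
      · exact hfc.isOpen_preimage _ hCbo
    haveI : PreconnectedSpace (Set.Icc (0:ℝ) 1) := Subtype.preconnectedSpace isPreconnected_Icc
    have hne : (f ⁻¹' Cb).Nonempty := by
      refine ⟨⟨0, hz⟩, ?_⟩
      simp only [Set.mem_preimage, hCbdef, Set.mem_setOf_eq, hf0, hself]
      norm_num
    have := hC.eq_univ hne
    have h1 : (⟨1, ho⟩ : Set.Icc (0:ℝ) 1) ∈ f ⁻¹' Cb := by rw [this]; trivial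
    have h2 : ρ μ (f ⟨1, ho⟩) < ⊤ := h1
    rwa [hf1] at h2
  -- boundedness
  have hcover : ∀ (r : ℝ≥0∞), 0 < r → ∃ F : Finset S, ∀ μ : S, ∃ i ∈ F, ρ i μ < r := by
    intro r hr
    have hcu : IsCompact (Set.univ : Set S) := isCompact_univ
    obtain ⟨F, hF⟩ := hcu.elim_finite_subcover
      (fun i : S => {ν | ρ i ν < r}) (fun i => hball i r hr)
      (fun ν _ => Set.mem_iUnion.mpr ⟨ν, by simp [hself, hr]⟩)
    refine ⟨F, fun μ => ?_⟩
    have := hF (Set.mem_univ μ)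
    simp only [Set.mem_iUnion, Set.mem_setOf_eq] at this
    obtain ⟨i, hiF, hi⟩ := this
    exact ⟨i, hiF, hi⟩
  constructor
  · obtain ⟨F, hF⟩ := hcover 1 (by norm_num)
    set R : ℝ≥0∞ := F.sup (fun i => ρ μ₀ i) + 1 with hRdef
    have hRne : R ≠ ⊤ := by
      rw [hRdef]
      apply ENNReal.add_ne_top.mpr
      constructor
      · exact (Finset.sup_lt_iff (by norm_num : (⊥:ℝ≥0∞) < ⊤)).mpr
          (fun i _ => hfin μ₀ i) |>.ne
      · norm_num
    have hAll : ∀ μ : S, ρ μ₀ μ ≤ R := by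
      intro μ
      obtain ⟨i, hiF, hi⟩ := hF μ
      calc ρ μ₀ μ ≤ ρ μ₀ i + ρ i μ := htri _ _ _
        _ ≤ F.sup (fun i => ρ μ₀ i) + 1 := add_le_add (Finset.le_sup hiF) hi.le
    refine ⟨(R + R).toReal, fun μ ν => ?_⟩
    rw [ENNReal.ofReal_toReal (ENNReal.add_ne_top.mpr ⟨hRne, hRne⟩)]
    calc ρ μ ν ≤ ρ μ μ₀ + ρ μ₀ ν := htri _ _ _
      _ ≤ R + R := add_le_add (by rw [hsymm]; exact hAll μ) (hAll ν)
  -- total boundedness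
  · obtain ⟨k₀, hk₀⟩ := hcond
    set k : ℝ := max k₀ 1 with hkdef
    have hk1 : 1 ≤ k := le_max_right _ _
    have hkpos : 0 < k := lt_of_lt_of_le one_pos hk1
    have hk : ∀ a ∈ ℒ, ‖a‖ ≤ k * ⨆ μ : S, ‖μ.1 a‖ := by
      intro a ha
      refine le_trans (hk₀ a ha) (mul_le_mul_of_nonneg_right (le_max_left _ _) ?_)
      exact Real.iSup_nonneg fun μ => norm_nonneg _
    rw [Metric.totallyBounded_iff]
    intro ε hε
    set r : ℝ := ε / (8 * k) with hrdef
    have hrpos : 0 < r := by positivity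
    obtain ⟨F, hF⟩ := hcover (ENNReal.ofReal r) (by simp [hrpos])
    -- the evaluation map into a finite product
    set Φ : A → (F → 𝕜) := fun a i => (i : S).1 a with hΦdef
    set B₁ : Set A := {a | a ∈ ℒ ∧ L a ≤ 1 ∧ ‖a‖ ≤ 1} with hB₁def
    have hΦB : ∀ a ∈ B₁, Φ a ∈ Set.pi Set.univ (fun _ : F => Metric.closedBall (0:𝕜) 1) := by
      intro a ha i _
      simp only [Metric.mem_closedBall, dist_zero_right, hΦdef]
      calc ‖(i : S).1 a‖ ≤ ‖(i : S).1‖ * ‖a‖ := ContinuousLinearMap.le_opNorm _ _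
        _ ≤ 1 * 1 := mul_le_mul (le_of_eq (hnorm1 _)) ha.2.2 (norm_nonneg _) zero_le_one
        _ = 1 := one_mul 1
    have hCpi : IsCompact (Set.pi Set.univ (fun _ : F => Metric.closedBall (0:𝕜) 1)) :=
      isCompact_univ_pi fun _ => ProperSpace.isCompact_closedBall 0 1
    obtain ⟨t, htfin, htcov⟩ := Metric.totallyBounded_iff.mp hCpi.totallyBounded r hrpos
    -- representatives
    have hrep : ∀ y : F → 𝕜, (∃ a ∈ B₁, Φ a ∈ Metric.ball y r) →
        ∃ a, a ∈ B₁ ∧ Φ a ∈ Metric.ball y r := fun y h => by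
      obtain ⟨a, ha, ha'⟩ := h; exact ⟨a, ha, ha'⟩
    set rep : (F → 𝕜) → A := fun y =>
      if h : ∃ a ∈ B₁, Φ a ∈ Metric.ball y r then (hrep y h).choose else 0 with hrepdef
    refine ⟨rep '' t, htfin.image rep, ?_⟩
    intro a ha
    have haB : a ∈ B₁ := ha
    have hΦa := htcov (hΦB a haB)
    simp only [Set.mem_iUnion] at hΦa
    obtain ⟨y, hyt, hya⟩ := hΦa
    have hyex : ∃ a ∈ B₁, Φ a ∈ Metric.ball y r := ⟨a, haB, hya⟩
    set b : A := rep y with hbdef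
    have hb : b ∈ B₁ ∧ Φ b ∈ Metric.ball y r := by
      rw [hbdef, hrepdef]
      simp only [hyex, dif_pos]
      exact (hrep y hyex).choose_spec
    refine Set.mem_iUnion.mpr ⟨b, Set.mem_iUnion.mpr ⟨⟨y, hyt, rfl⟩, ?_⟩⟩
    -- now estimate ‖a - b‖
    have habi : ∀ i : F, ‖(i : S).1 a - (i : S).1 b‖ ≤ 2 * r := by
      intro i
      have h1 : dist (Φ a) y < r := hya
      have h2 : dist (Φ b) y < r := hb.2
      have h3 : dist (Φ a i) (Φ b i) ≤ dist (Φ a) (Φ b) := dist_le_pi_dist _ _ i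
      have h4 : dist (Φ a) (Φ b) ≤ dist (Φ a) y + dist y (Φ b) := dist_triangle _ _ _
      rw [dist_comm y (Φ b)] at h4
      have : dist (Φ a i) (Φ b i) ≤ 2 * r := by
        calc dist (Φ a i) (Φ b i) ≤ dist (Φ a) y + dist (Φ b) y := le_trans h3 h4
          _ ≤ r + r := add_le_add h1.le h2.le
          _ = 2 * r := by ring
      simpa [hΦdef, dist_eq_norm] using this
    set c : A := a - b with hcdef
    have hcℒ : c ∈ ℒ := Submodule.sub_mem ℒ haB.1 hb.1.1
    have hLc : L c ≤ 2 := by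
      have hnegb : L (-b) = L b := by
        have := hL_smul (-1 : 𝕜) b hb.1.1
        simpa using this
      have : L (a + (-b)) ≤ L a + L (-b) :=
        hL_add a haB.1 (-b) (Submodule.neg_mem ℒ hb.1.1)
      rw [hnegb] at this
      calc L c = L (a + (-b)) := by rw [hcdef, sub_eq_add_neg]
        _ ≤ L a + L b := this
        _ ≤ 1 + 1 := add_le_add haB.2.1 hb.1.2.1
        _ = 2 := by norm_num
    -- half of c
    set c' : A := ((2:𝕜)⁻¹) • c with hc'def
    have hc'ℒ : c' ∈ ℒ := Submodule.smul_mem ℒ _ hcℒ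
    have hLc' : L c' ≤ 1 := by
      rw [hc'def, hL_smul _ _ hcℒ]
      have h2norm : ‖((2:𝕜)⁻¹)‖ = 2⁻¹ := by
        rw [norm_inv]
        norm_num
      rw [h2norm]
      calc (2:ℝ)⁻¹ * L c ≤ 2⁻¹ * 2 := by
            apply mul_le_mul_of_nonneg_left hLc; norm_num
        _ = 1 := by norm_num
    have hc2 : (2:𝕜) • c' = c := by
      rw [hc'def, smul_smul]
      norm_num
    -- key estimate
    have hkey : ∀ μ : S, ‖μ.1 c‖ ≤ 4 * r := by
      intro μ
      obtain ⟨i, hiF, hi⟩ := hF μ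
      have hii : (⟨i, hiF⟩ : F) = (⟨i, hiF⟩ : F) := rfl
      -- bound on half difference
      have hhalf : ‖i.1 c' - μ.1 c'‖ ≤ r := by
        have h := hbound i μ c' hc'ℒ hLc'
        have hlt : (‖i.1 c' - μ.1 c'‖₊ : ℝ≥0∞) < ENNReal.ofReal r := lt_of_le_of_lt h hi
        have := (ENNReal.lt_ofReal_iff_toReal_lt (by simp)).mp hlt
        simpa using this.le
      have hdiff : ‖μ.1 c - i.1 c‖ ≤ 2 * r := by
        have : μ.1 c - i.1 c = (2:𝕜) • (μ.1 c' - i.1 c') := by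
          rw [smul_sub, ← ContinuousLinearMap.map_smul, ← ContinuousLinearMap.map_smul, hc2]
        rw [this, norm_smul]
        have h2 : ‖(2:𝕜)‖ = 2 := by norm_num
        rw [h2, norm_sub_rev]
        linarith [hhalf]
      have hic : ‖i.1 c‖ ≤ 2 * r := by
        have := habi ⟨i, hiF⟩
        simpa [hcdef, map_sub] using this
      calc ‖μ.1 c‖ ≤ ‖μ.1 c - i.1 c‖ + ‖i.1 c‖ := by
            have h5 := norm_add_le (μ.1 c - i.1 c) (i.1 c)
            simpa using h5
        _ ≤ 2 * r + 2 * r := add_le_add hdiff hic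
        _ = 4 * r := by ring
    have hnormc : ‖c‖ ≤ ε / 2 := by
      calc ‖c‖ ≤ k * ⨆ μ : S, ‖μ.1 c‖ := hk c hcℒ
        _ ≤ k * (4 * r) := by
            apply mul_le_mul_of_nonneg_left _ hkpos.le
            exact Real.iSup_le (fun μ => hkey μ) (by positivity)
        _ = ε / 2 := by rw [hrdef]; field_simp; ring
    show a ∈ Metric.ball b ε
    rw [Metric.mem_ball, dist_eq_norm]
    calc ‖a - b‖ = ‖c‖ := by rw [hcdef]
      _ ≤ ε / 2 := hnormc
      _ < ε := by linarith
end

section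
/- Let A be an infinite-dimensional normed space, let K be any one-dimensional subspace of A, set ℒ = A, and let L be the pull-back to A of the quotient norm on A/K (i.e. L(a) = dist(a, K)). Then the associated metric ρ on S is bounded (indeed ρ(μ,ν) ≤ 2 for all μ,ν ∈ S), but the image of ℒ₁ = {a ∈ ℒ : L(a) ≤ 1} in ℒ/K is not totally bounded for the quotient norm, and B₁ = {a ∈ ℒ : L(a) ≤ 1 and ‖a‖ ≤ 1} is not totally bounded in A. -/
open scoped ENNReal NNReal Topology

open Metric in
lemma my_not_totallyBounded {X : Type*} [PseudoMetricSpace X] {s : Set X}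
    (f : ℕ → X) (hf : ∀ n, f n ∈ s) {ε : ℝ} (hε : 0 < ε)
    (h : Pairwise fun m n => ε ≤ dist (f m) (f n)) : ¬ TotallyBounded s := by
  intro ht
  obtain ⟨t, htfin, hcov⟩ := Metric.totallyBounded_iff.1 ht (ε / 2) (by linarith)
  choose c hc1 hc2 using fun n => Set.mem_iUnion₂.1 (hcov (hf n))
  haveI : Finite t := htfin
  obtain ⟨m, n, hmn, he⟩ :=
    Finite.exists_ne_map_eq_of_infinite (fun n => (⟨c n, hc1 n⟩ : t))
  have : dist (f m) (f n) < ε := by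
    have h1 := Metric.mem_ball.1 (hc2 m)
    have h2 := Metric.mem_ball.1 (hc2 n)
    have hcc : c m = c n := congrArg Subtype.val he
    calc dist (f m) (f n) ≤ dist (f m) (c m) + dist (c n) (f n) := by
          rw [hcc]; exact dist_triangle _ _ _
      _ < ε / 2 + ε / 2 := by rw [dist_comm (c n)]; exact add_lt_add h1 h2
      _ = ε := by ring
  exact absurd (h hmn) (not_le.2 this)

/- STATEMENT 9 (remark after Theorem 1.9): `A` an infinite-dimensional normed
space, `K` a one-dimensional subspace, `ℒ = A`, and `L a = dist(a, K)` (the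
pull-back of the quotient norm on `A ⧸ K`).  Then `ρ ≤ 2` on `S`, but the image
of `ℒ₁ = {a | L a ≤ 1}` in `A ⧸ K` is not totally bounded for the quotient
norm, and `B₁ = {a | L a ≤ 1, ‖a‖ ≤ 1}` is not totally bounded in `A`. -/
theorem statement9
    {𝕜 : Type*} [RCLike 𝕜]
    {A : Type*} [NormedAddCommGroup A] [NormedSpace 𝕜 A]
    (hinf : ¬ FiniteDimensional 𝕜 A)
    (K : Submodule 𝕜 A) (hKdim : Module.finrank 𝕜 K = 1)
    (L : A → ℝ) (hL : ∀ a : A, L a = Metric.infDist a (K : Set A))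
    (η : K →L[𝕜] 𝕜) (hη : ‖η‖ = 1)
    (S : Set (A →L[𝕜] 𝕜))
    (hS : S = {μ | (∀ a : K, μ (a : A) = η a) ∧ ‖μ‖ = 1})
    (ρ : S → S → ℝ≥0∞)
    (hρ : ∀ μ ν : S,
      ρ μ ν = ⨆ a ∈ {a : A | L a ≤ 1}, (‖μ.1 a - ν.1 a‖₊ : ℝ≥0∞)) :
    (∀ μ ν : S, ρ μ ν ≤ 2) ∧
      ¬ TotallyBounded
        ((fun a => (Submodule.Quotient.mk a : A ⧸ K)) '' {a : A | L a ≤ 1}) ∧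
      ¬ TotallyBounded {a : A | L a ≤ 1 ∧ ‖a‖ ≤ 1} := by
  have hKne : (K : Set A).Nonempty := ⟨0, K.zero_mem⟩
  have hKfd : FiniteDimensional 𝕜 K := Module.finite_of_finrank_eq_succ hKdim
  refine ⟨?_, ?_, ?_⟩
  · -- ρ ≤ 2
    intro μ ν
    rw [hρ]
    refine iSup₂_le fun a ha => ?_
    have hreal : ‖μ.1 a - ν.1 a‖ ≤ 2 := by
      have hμ : μ.1 ∈ {μ : A →L[𝕜] 𝕜 | (∀ a : K, μ (a : A) = η a) ∧ ‖μ‖ = 1} :=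
        hS ▸ μ.2
      have hν : ν.1 ∈ {μ : A →L[𝕜] 𝕜 | (∀ a : K, μ (a : A) = η a) ∧ ‖μ‖ = 1} :=
        hS ▸ ν.2
      obtain ⟨hμK, hμn⟩ := hμ
      obtain ⟨hνK, hνn⟩ := hν
      have key : ∀ k ∈ (K : Set A), ‖μ.1 a - ν.1 a‖ / 2 ≤ dist a k := by
        intro k hk
        have heq : μ.1 a - ν.1 a = μ.1 (a - k) - ν.1 (a - k) := by
          have h1 : μ.1 k = ν.1 k := by
            rw [hμK ⟨k, hk⟩, hνK ⟨k, hk⟩]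
          simp only [map_sub, h1]
          ring
        have : ‖μ.1 a - ν.1 a‖ ≤ 2 * ‖a - k‖ := by
          rw [heq]
          calc ‖μ.1 (a - k) - ν.1 (a - k)‖ ≤ ‖μ.1 (a - k)‖ + ‖ν.1 (a - k)‖ :=
                norm_sub_le _ _
            _ ≤ ‖μ.1‖ * ‖a - k‖ + ‖ν.1‖ * ‖a - k‖ :=
                add_le_add (μ.1.le_opNorm _) (ν.1.le_opNorm _)
            _ = 2 * ‖a - k‖ := by rw [hμn, hνn]; ring
        rw [dist_eq_norm]
        linarith
      have h2 : ‖μ.1 a - ν.1 a‖ / 2 ≤ Metric.infDist a (K : Set A) := by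
        by_contra hcon
        push_neg at hcon
        obtain ⟨y, hy, hdy⟩ := (Metric.infDist_lt_iff hKne).1 hcon
        exact absurd (key y hy) (not_le.2 hdy)
      have h3 : Metric.infDist a (K : Set A) ≤ 1 := by rw [← hL]; exact ha
      linarith
    have : (‖μ.1 a - ν.1 a‖₊ : ℝ≥0∞) ≤ ((2 : ℝ≥0) : ℝ≥0∞) := by
      rw [ENNReal.coe_le_coe]
      exact_mod_cast hreal
    simpa using this
  · -- quotient image not totally bounded
    have hclosed : IsClosed (K : Set A) := Submodule.closed_of_finiteDimensional K
    have hQinf : ¬ FiniteDimensional 𝕜 (A ⧸ K) := by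
      intro hQ
      haveI : IsNoetherian 𝕜 K := IsNoetherian.iff_fg.2 hKfd
      haveI : IsNoetherian 𝕜 (A ⧸ K) := IsNoetherian.iff_fg.2 hQ
      haveI : IsNoetherian 𝕜 A := (isNoetherian_iff_submodule_quotient K).2 ⟨‹_›, ‹_›⟩
      exact hinf (IsNoetherian.iff_fg.1 ‹_›)
    letI : NormedAddCommGroup (A ⧸ K) :=
      @Submodule.Quotient.normedAddCommGroup _ _ _ _ _ K hclosed
    obtain ⟨R, g, hR, hgle, hgsep⟩ :=
      exists_seq_norm_le_one_le_norm_sub (𝕜 := 𝕜) (E := A ⧸ K) hQinf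
    obtain ⟨c, hc0, hcR⟩ := NormedField.exists_norm_lt 𝕜
      (one_div_pos.2 (by linarith : (0:ℝ) < R))
    -- lifts
    have hsurj := Submodule.Quotient.mk_surjective K
    choose a hamk using fun n => hsurj (c • g n)
    have hnorm_mk : ∀ x : A, ‖(Submodule.Quotient.mk x : A ⧸ K)‖
        = Metric.infDist x (K : Set A) := fun x => QuotientAddGroup.norm_mk x
    have hmem : ∀ n, a n ∈ {x : A | L x ≤ 1} := by
      intro n
      have : ‖(Submodule.Quotient.mk (a n) : A ⧸ K)‖ = ‖c • g n‖ := by rw [hamk n]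
      rw [hnorm_mk] at this
      have hle : ‖c • g n‖ ≤ 1 := by
        rw [norm_smul]
        calc ‖c‖ * ‖g n‖ ≤ ‖c‖ * R := by
              exact mul_le_mul_of_nonneg_left (hgle n) (norm_nonneg c)
          _ ≤ (1/R) * R := by nlinarith [norm_nonneg (g n)]
          _ = 1 := by field_simp
      simp only [Set.mem_setOf_eq, hL]
      rw [this]
      exact hle
    refine my_not_totallyBounded (fun n => Submodule.Quotient.mk (a n))
      (fun n => Set.mem_image_of_mem _ (hmem n)) hc0 ?_
    intro m n hmn
    have : dist (Submodule.Quotient.mk (a m) : A ⧸ K) (Submodule.Quotient.mk (a n))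
        = ‖c • g m - c • g n‖ := by rw [dist_eq_norm, hamk m, hamk n]
    rw [this, ← smul_sub, norm_smul]
    calc ‖c‖ = ‖c‖ * 1 := by ring
      _ ≤ ‖c‖ * ‖g m - g n‖ := mul_le_mul_of_nonneg_left (hgsep hmn) (le_of_lt hc0)
  · -- B₁ not totally bounded
    obtain ⟨R, g, hR, hgle, hgsep⟩ :=
      exists_seq_norm_le_one_le_norm_sub (𝕜 := 𝕜) (E := A) hinf
    obtain ⟨c, hc0, hcR⟩ := NormedField.exists_norm_lt 𝕜
      (one_div_pos.2 (by linarith : (0:ℝ) < R))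
    have hmem : ∀ n, c • g n ∈ {x : A | L x ≤ 1 ∧ ‖x‖ ≤ 1} := by
      intro n
      have hle : ‖c • g n‖ ≤ 1 := by
        rw [norm_smul]
        calc ‖c‖ * ‖g n‖ ≤ ‖c‖ * R :=
              mul_le_mul_of_nonneg_left (hgle n) (norm_nonneg c)
          _ ≤ (1/R) * R := by nlinarith [norm_nonneg (g n)]
          _ = 1 := by field_simp
      refine ⟨?_, hle⟩
      rw [hL]
      calc Metric.infDist (c • g n) (K : Set A) ≤ dist (c • g n) 0 :=
            Metric.infDist_le_dist_of_mem K.zero_mem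
        _ = ‖c • g n‖ := by rw [dist_zero_right]
        _ ≤ 1 := hle
    refine my_not_totallyBounded (fun n => c • g n) hmem hc0 ?_
    intro m n hmn
    rw [dist_eq_norm, ← smul_sub, norm_smul]
    calc ‖c‖ = ‖c‖ * 1 := by ring
      _ ≤ ‖c‖ * ‖g m - g n‖ := mul_le_mul_of_nonneg_left (hgsep hmn) (le_of_lt hc0)
end

section
/- The set ℒ of Lipschitz elements is a dense *-subalgebra of A. -/
open scoped ENNReal NNReal Topology
open MeasureTheory

/- STATEMENT 10 (Proposition 2.2): for a strongly continuous action `α` of a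
compact group `G` by *-automorphisms of a unital C*-algebra `A` and a length
function `ℓ` on `G`, the set `ℒ = {a | L a < ∞}` of Lipschitz elements, where
`L a = sup_{x ≠ e} ‖α_x a - a‖ / ℓ x`, is a dense *-subalgebra of `A`. -/
theorem statement10
    {G : Type*} [Group G] [TopologicalSpace G] [IsTopologicalGroup G]
    [CompactSpace G]
    {A : Type*} [NormedRing A] [StarRing A] [CStarRing A] [NormedAlgebra ℂ A]
    [StarModule ℂ A] [CompleteSpace A]
    (α : G → A ≃⋆ₐ[ℂ] A)
    (hα_one : ∀ a : A, α 1 a = a)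
    (hα_mul : ∀ (x y : G) (a : A), α (x * y) a = α x (α y a))
    (hα_cont : ∀ a : A, Continuous fun x => α x a)
    (ℓ : G → ℝ) (hℓ_cont : Continuous ℓ) (hℓ_nonneg : ∀ x, 0 ≤ ℓ x)
    (hℓ_sub : ∀ x y, ℓ (x * y) ≤ ℓ x + ℓ y)
    (hℓ_inv : ∀ x, ℓ x⁻¹ = ℓ x)
    (hℓ_zero : ∀ x, ℓ x = 0 ↔ x = 1)
    (L : A → ℝ≥0∞)
    (hL : ∀ a : A,
      L a = ⨆ x ∈ {x : G | x ≠ 1}, ENNReal.ofReal (‖α x a - a‖ / ℓ x))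
    : Dense {a : A | L a < ⊤} ∧
      (1 : A) ∈ {a : A | L a < ⊤} ∧
      (∀ a b : A, L a < ⊤ → L b < ⊤ → L (a + b) < ⊤) ∧
      (∀ (c : ℂ) (a : A), L a < ⊤ → L (c • a) < ⊤) ∧
      (∀ a b : A, L a < ⊤ → L b < ⊤ → L (a * b) < ⊤) ∧
      (∀ a : A, L a < ⊤ → L (star a) < ⊤) := by
  letI : CStarAlgebra A := {}
  have hiso : ∀ (x : G) (a : A), ‖α x a‖ = ‖a‖ := fun x a =>
    NonUnitalStarAlgHom.norm_map (α x) (α x).injective a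
  have hℓpos : ∀ x : G, x ≠ 1 → 0 < ℓ x := fun x hx =>
    lt_of_le_of_ne (hℓ_nonneg x) (fun h => hx ((hℓ_zero x).mp h.symm))
  -- sufficient condition for membership in ℒ
  have hchar : ∀ a : A, (∃ C : ℝ, ∀ x, ‖α x a - a‖ ≤ C * ℓ x) → L a < ⊤ := by
    rintro a ⟨C, hC⟩
    rw [hL]
    refine lt_of_le_of_lt (iSup_le fun x => iSup_le fun hx => ?_)
      (ENNReal.ofReal_lt_top : ENNReal.ofReal C < ⊤)
    exact ENNReal.ofReal_le_ofReal ((div_le_iff₀ (hℓpos x hx)).mpr (hC x))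
  -- necessary condition
  have hchar' : ∀ a : A, L a < ⊤ → ∀ x, ‖α x a - a‖ ≤ (L a).toReal * ℓ x := by
    intro a ha x
    by_cases hx : x = 1
    · subst hx
      simpa [hα_one] using mul_nonneg ENNReal.toReal_nonneg (hℓ_nonneg 1)
    · have h1 : ENNReal.ofReal (‖α x a - a‖ / ℓ x) ≤ L a := by
        rw [hL]
        exact le_iSup₂ (f := fun (x : G) (_ : x ∈ {x : G | x ≠ 1}) =>
          ENNReal.ofReal (‖α x a - a‖ / ℓ x)) x hx
      have h2 := ENNReal.toReal_mono ha.ne h1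
      rw [ENNReal.toReal_ofReal (div_nonneg (norm_nonneg _) (hℓ_nonneg x))] at h2
      exact (div_le_iff₀ (hℓpos x hx)).mp h2
  refine ⟨?_, ?_, ?_, ?_, ?_, ?_⟩
  · -- density
    haveI : T2Space G := by
      refine ⟨fun x z hxz => ?_⟩
      have hne : x⁻¹ * z ≠ 1 := fun h => hxz (inv_mul_eq_one.mp h)
      have hrpos : 0 < ℓ (x⁻¹ * z) := hℓpos _ hne
      have hFcont : Continuous fun w => ℓ (x⁻¹ * w) :=
        hℓ_cont.comp (continuous_mul_left x⁻¹)
      refine ⟨(fun w => ℓ (x⁻¹ * w)) ⁻¹' Set.Iio (ℓ (x⁻¹ * z) / 2),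
        (fun w => ℓ (x⁻¹ * w)) ⁻¹' Set.Ioi (ℓ (x⁻¹ * z) / 2),
        hFcont.isOpen_preimage _ isOpen_Iio, hFcont.isOpen_preimage _ isOpen_Ioi,
        ?_, ?_, ?_⟩
      · have : ℓ (x⁻¹ * x) = 0 := by rw [inv_mul_cancel]; exact (hℓ_zero 1).mpr rfl
        simp only [Set.mem_preimage, Set.mem_Iio, this]
        linarith
      · simp only [Set.mem_preimage, Set.mem_Ioi]
        linarith
      · rw [Set.disjoint_left]
        intro w hw hw'
        simp only [Set.mem_preimage, Set.mem_Iio, Set.mem_Ioi] at hw hw'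
        linarith
    borelize G
    set μ : Measure G := Measure.haar with hμdef
    haveI : IsFiniteMeasure μ := inferInstance
    rw [Metric.dense_iff]
    intro a ε hε
    -- find δ
    have key : ∃ δ > (0:ℝ), ∀ x, ℓ x < δ → ‖α x a - a‖ ≤ ε/2 := by
      set V := {x : G | ‖α x a - a‖ < ε/2} with hV
      have hVopen : IsOpen V :=
        isOpen_lt (((hα_cont a).sub continuous_const).norm) continuous_const
      have h1V : (1:G) ∈ V := by
        simp only [hV, Set.mem_setOf_eq, hα_one, sub_self, norm_zero]
        linarith
      rcases Set.eq_empty_or_nonempty Vᶜ with hK | hK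
      · refine ⟨1, one_pos, fun x _ => ?_⟩
        have : x ∈ V := by
          by_contra h
          exact absurd (Set.eq_empty_iff_forall_notMem.mp hK x) (fun h2 => h2 h)
        exact le_of_lt this
      · have hKcomp : IsCompact Vᶜ := hVopen.isClosed_compl.isCompact
        obtain ⟨x₀, hx₀K, hmin⟩ := hKcomp.exists_isMinOn hK hℓ_cont.continuousOn
        have hx₀ne : x₀ ≠ 1 := fun h => hx₀K (h ▸ h1V)
        refine ⟨ℓ x₀, hℓpos x₀ hx₀ne, fun x hx => ?_⟩
        have hxV : x ∈ V := by
          by_contra h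
          exact absurd (hmin h) (not_le.mpr hx)
        exact le_of_lt hxV
    obtain ⟨δ, hδ, hδprop⟩ := key
    set f : G → ℝ := fun x => max (δ - ℓ x) 0 with hfdef
    have hf_cont : Continuous f := (continuous_const.sub hℓ_cont).max continuous_const
    have hf_nonneg : ∀ x, 0 ≤ f x := fun x => le_max_right _ _
    have hf_zero : ∀ x, δ ≤ ℓ x → f x = 0 := fun x hx => max_eq_right (by linarith)
    have hf1 : f 1 = δ := by
      have : ℓ (1:G) = 0 := (hℓ_zero 1).mpr rfl
      simp [hfdef, this, le_of_lt hδ]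
    have hf_lip : ∀ x y : G, |f x - f y| ≤ |ℓ x - ℓ y| := by
      intro x y
      have := abs_max_sub_max_le_abs (δ - ℓ x) (δ - ℓ y) 0
      calc |f x - f y| ≤ |(δ - ℓ x) - (δ - ℓ y)| := this
        _ = |ℓ x - ℓ y| := by rw [abs_sub_comm]; ring_nf
    have hf_int : Integrable f μ :=
      hf_cont.integrable_of_hasCompactSupport (HasCompactSupport.of_compactSpace f)
    set c := ∫ x, f x ∂μ with hcdef
    have hc : 0 < c := by
      rw [hcdef, integral_pos_iff_support_of_nonneg hf_nonneg hf_int]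
      exact hf_cont.isOpen_support.measure_pos μ
        ⟨1, by simp [Function.mem_support, hf1, hδ.ne']⟩
    set g : G → A := fun x => f x • α x a with hgdef
    have hg_cont : Continuous g := hf_cont.smul (hα_cont a)
    have hg_int : Integrable g μ :=
      hg_cont.integrable_of_hasCompactSupport (HasCompactSupport.of_compactSpace g)
    set b := c⁻¹ • ∫ x, g x ∂μ with hbdef
    -- b approximates a
    have e1 : b - a = c⁻¹ • ∫ x, f x • (α x a - a) ∂μ := by
      have h2 : ∫ x, f x • (α x a - a) ∂μ = (∫ x, g x ∂μ) - c • a := by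
        simp only [smul_sub]
        rw [integral_sub hg_int (hf_int.smul_const a), integral_smul_const]
      rw [h2, smul_sub, smul_smul, inv_mul_cancel₀ hc.ne', one_smul, hbdef]
    have hnorm_int : Integrable (fun x => ‖f x • (α x a - a)‖) μ :=
      ((hf_cont.smul ((hα_cont a).sub continuous_const)).norm).integrable_of_hasCompactSupport
        (HasCompactSupport.of_compactSpace _)
    have hba : ‖b - a‖ ≤ ε/2 := by
      calc ‖b - a‖ = c⁻¹ * ‖∫ x, f x • (α x a - a) ∂μ‖ := by
            rw [e1, norm_smul, Real.norm_eq_abs, abs_of_pos (inv_pos.mpr hc)]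
        _ ≤ c⁻¹ * ∫ x, ‖f x • (α x a - a)‖ ∂μ := by
            gcongr
            exact norm_integral_le_integral_norm _
        _ ≤ c⁻¹ * ∫ x, f x * (ε/2) ∂μ := by
            gcongr c⁻¹ * ?_
            refine integral_mono hnorm_int (hf_int.mul_const _) (fun x => ?_)
            rw [norm_smul, Real.norm_eq_abs, abs_of_nonneg (hf_nonneg x)]
            rcases lt_or_ge (ℓ x) δ with h | h
            · exact mul_le_mul_of_nonneg_left (hδprop x h) (hf_nonneg x)
            · simp [hf_zero x h]
        _ = c⁻¹ * (c * (ε/2)) := by rw [integral_mul_const]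
        _ = ε/2 := by field_simp
    -- b is Lipschitz
    have hLb : L b < ⊤ := by
      refine hchar b ⟨c⁻¹ * (‖a‖ * (μ Set.univ).toReal), fun y => ?_⟩
      have hTcont : Continuous (α y) :=
        (AddMonoidHomClass.isometry_of_norm (α y) (hiso y)).continuous
      let T : A →L[ℂ] A :=
        ⟨{ toFun := α y, map_add' := map_add (α y), map_smul' := _root_.map_smul (α y) },
          hTcont⟩
      have hTapp : ∀ u : A, T u = α y u := fun u => rfl
      have hgy_cont : Continuous fun x => f (y⁻¹ * x) • α x a :=
        (hf_cont.comp (continuous_mul_left y⁻¹)).smul (hα_cont a)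
      have hgy_int : Integrable (fun x => f (y⁻¹ * x) • α x a) μ :=
        hgy_cont.integrable_of_hasCompactSupport (HasCompactSupport.of_compactSpace _)
      have e2 : α y b = c⁻¹ • ∫ x, f (y⁻¹ * x) • α x a ∂μ := by
        have s0 : α y b = c⁻¹ • T (∫ x, g x ∂μ) := by
          rw [hbdef, ← hTapp, T.map_smul_of_tower]
        have s1 : T (∫ x, g x ∂μ) = ∫ x, f x • α (y * x) a ∂μ := by
          rw [← T.integral_comp_comm hg_int]
          refine integral_congr_ae (Filter.EventuallyEq.of_eq (funext fun x => ?_))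
          show T (f x • α x a) = f x • α (y * x) a
          rw [T.map_smul_of_tower, hTapp, ← hα_mul]
        have s2 : ∫ x, f x • α (y * x) a ∂μ = ∫ x, f (y⁻¹ * x) • α x a ∂μ := by
          have := (measurePreserving_mul_left μ y).integral_comp
            (MeasurableEquiv.mulLeft y).measurableEmbedding
            (fun x => f (y⁻¹ * x) • α x a)
          simp only [MeasurableEquiv.coe_mulLeft, inv_mul_cancel_left] at this
          exact this
        rw [s0, s1, s2]
      have e3 : α y b - b = c⁻¹ • ∫ x, (f (y⁻¹ * x) - f x) • α x a ∂μ := by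
        rw [e2, hbdef, ← smul_sub, ← integral_sub hgy_int hg_int]
        simp only [sub_smul, hgdef]
      have hdiff_int : Integrable (fun x => ‖(f (y⁻¹ * x) - f x) • α x a‖) μ :=
        ((((hf_cont.comp (continuous_mul_left y⁻¹)).sub hf_cont).smul
          (hα_cont a)).norm).integrable_of_hasCompactSupport
          (HasCompactSupport.of_compactSpace _)
      calc ‖α y b - b‖ = c⁻¹ * ‖∫ x, (f (y⁻¹ * x) - f x) • α x a ∂μ‖ := by
            rw [e3, norm_smul, Real.norm_eq_abs, abs_of_pos (inv_pos.mpr hc)]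
        _ ≤ c⁻¹ * ∫ x, ‖(f (y⁻¹ * x) - f x) • α x a‖ ∂μ := by
            gcongr
            exact norm_integral_le_integral_norm _
        _ ≤ c⁻¹ * ∫ _x, ℓ y * ‖a‖ ∂μ := by
            gcongr c⁻¹ * ?_
            refine integral_mono hdiff_int (integrable_const _) (fun x => ?_)
            rw [norm_smul, Real.norm_eq_abs, hiso]
            have hlip : |f (y⁻¹ * x) - f x| ≤ ℓ y := by
              refine le_trans (hf_lip _ _) (abs_le.mpr ⟨?_, ?_⟩)
              · have h1 : ℓ x = ℓ (y * (y⁻¹ * x)) := by rw [mul_inv_cancel_left]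
                have h2 := hℓ_sub y (y⁻¹ * x)
                linarith [h1 ▸ h2]
              · have h2 := hℓ_sub y⁻¹ x
                rw [hℓ_inv] at h2
                linarith
            exact mul_le_mul_of_nonneg_right hlip (norm_nonneg a)
        _ = c⁻¹ * ((μ Set.univ).toReal * (ℓ y * ‖a‖)) := by
            rw [integral_const, smul_eq_mul, measureReal_def]
        _ = c⁻¹ * (‖a‖ * (μ Set.univ).toReal) * ℓ y := by ring
    refine ⟨b, Metric.mem_ball.mpr ?_, hLb⟩
    rw [dist_eq_norm]
    linarith
  · exact hchar 1 ⟨0, fun x => by simp [map_one, hℓ_nonneg]⟩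
  · intro a b ha hb
    refine hchar _ ⟨(L a).toReal + (L b).toReal, fun x => ?_⟩
    calc ‖α x (a + b) - (a + b)‖ = ‖(α x a - a) + (α x b - b)‖ := by
          rw [map_add, add_sub_add_comm]
      _ ≤ ‖α x a - a‖ + ‖α x b - b‖ := norm_add_le _ _
      _ ≤ (L a).toReal * ℓ x + (L b).toReal * ℓ x := by
          gcongr; exacts [hchar' a ha x, hchar' b hb x]
      _ = ((L a).toReal + (L b).toReal) * ℓ x := by ring
  · intro c a ha
    refine hchar _ ⟨‖c‖ * (L a).toReal, fun x => ?_⟩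
    calc ‖α x (c • a) - c • a‖ = ‖c • (α x a - a)‖ := by rw [_root_.map_smul, smul_sub]
      _ = ‖c‖ * ‖α x a - a‖ := norm_smul c _
      _ ≤ ‖c‖ * ((L a).toReal * ℓ x) := by gcongr; exact hchar' a ha x
      _ = ‖c‖ * (L a).toReal * ℓ x := by ring
  · intro a b ha hb
    refine hchar _ ⟨‖a‖ * (L b).toReal + (L a).toReal * ‖b‖, fun x => ?_⟩
    calc ‖α x (a * b) - a * b‖
        = ‖α x a * (α x b - b) + (α x a - a) * b‖ := by rw [map_mul]; congr 1; rw [mul_sub, sub_mul]; abel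
      _ ≤ ‖α x a * (α x b - b)‖ + ‖(α x a - a) * b‖ := norm_add_le _ _
      _ ≤ ‖α x a‖ * ‖α x b - b‖ + ‖α x a - a‖ * ‖b‖ := by
          gcongr <;> exact norm_mul_le _ _
      _ ≤ ‖a‖ * ((L b).toReal * ℓ x) + (L a).toReal * ℓ x * ‖b‖ := by
          rw [hiso]; gcongr; exacts [hchar' b hb x, hchar' a ha x]
      _ = (‖a‖ * (L b).toReal + (L a).toReal * ‖b‖) * ℓ x := by ring
  · intro a ha
    refine hchar _ ⟨(L a).toReal, fun x => ?_⟩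
    calc ‖α x (star a) - star a‖ = ‖star (α x a - a)‖ := by rw [map_star, star_sub]
      _ = ‖α x a - a‖ := norm_star _
      _ ≤ (L a).toReal * ℓ x := hchar' a ha x
end

section
/- Suppose the action α is ergodic, and let η be the α-invariant state on A defined by η(a) = ∫_G α_x(a) dx. Then for every state μ of A one has ρ(μ,η) ≤ ∫_G ℓ(x) dx, and consequently ρ(μ,ν) ≤ 2∫_G ℓ(x) dx for all states μ, ν of A; in particular ρ is bounded. -/
open scoped ENNReal NNReal Topology
open MeasureTheory

/- STATEMENT 13 (Lemma 2.4): `α` ergodic, `η` the `α`-invariant state given by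
`η(a)·1 = ∫_G α_x(a) dx` (Haar measure of total mass 1).  Then for every state
`μ` of `A` (a norm-one functional with `μ(1) = 1`), `ρ(μ,η) ≤ ∫_G ℓ dx`, and
hence `ρ(μ,ν) ≤ 2∫_G ℓ dx` for all states `μ, ν`; in particular `ρ` is
bounded. -/
theorem statement13
    {G : Type*} [Group G] [TopologicalSpace G] [IsTopologicalGroup G]
    [CompactSpace G]
    {A : Type*} [NormedRing A] [StarRing A] [CStarRing A] [NormedAlgebra ℂ A]
    [StarModule ℂ A] [CompleteSpace A]
    (α : G → A ≃⋆ₐ[ℂ] A)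
    (hα_one : ∀ a : A, α 1 a = a)
    (hα_mul : ∀ (x y : G) (a : A), α (x * y) a = α x (α y a))
    (hα_cont : ∀ a : A, Continuous fun x => α x a)
    (ℓ : G → ℝ) (hℓ_cont : Continuous ℓ) (hℓ_nonneg : ∀ x, 0 ≤ ℓ x)
    (hℓ_sub : ∀ x y, ℓ (x * y) ≤ ℓ x + ℓ y)
    (hℓ_inv : ∀ x, ℓ x⁻¹ = ℓ x)
    (hℓ_zero : ∀ x, ℓ x = 0 ↔ x = 1)
    (L : A → ℝ≥0∞)
    (hL : ∀ a : A,
      L a = ⨆ x ∈ {x : G | x ≠ 1}, ENNReal.ofReal (‖α x a - a‖ / ℓ x))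
    [MeasurableSpace G] [BorelSpace G]
    (haar : Measure G) [haar.IsHaarMeasure] [IsProbabilityMeasure haar]
    (hergodic : ∀ a : A, (∀ x : G, α x a = a) → ∃ c : ℂ, a = c • (1 : A))
    (η : A →L[ℂ] ℂ) (hη_norm : ‖η‖ = 1) (hη_one : η 1 = 1)
    (hη : ∀ a : A, η a • (1 : A) = ∫ x, α x a ∂haar)
    (ρ : (A →L[ℂ] ℂ) → (A →L[ℂ] ℂ) → ℝ≥0∞)
    (hρ : ∀ φ ψ : A →L[ℂ] ℂ,
      ρ φ ψ = ⨆ a ∈ {a : A | L a < ⊤ ∧ L a ≤ 1}, (‖φ a - ψ a‖₊ : ℝ≥0∞)) :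
    (∀ φ : A →L[ℂ] ℂ, ‖φ‖ = 1 → φ 1 = 1 →
      ρ φ η ≤ ENNReal.ofReal (∫ x, ℓ x ∂haar)) ∧
    (∀ φ ψ : A →L[ℂ] ℂ, ‖φ‖ = 1 → φ 1 = 1 → ‖ψ‖ = 1 → ψ 1 = 1 →
      ρ φ ψ ≤ ENNReal.ofReal (2 * ∫ x, ℓ x ∂haar)) := by
  have hℓ_int : Integrable ℓ haar :=
    hℓ_cont.integrable_of_hasCompactSupport
      (isCompact_univ.of_isClosed_subset (isClosed_tsupport ℓ) (Set.subset_univ _))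
  have key : ∀ a : A, L a ≤ 1 → ‖a - η a • (1 : A)‖ ≤ ∫ x, ℓ x ∂haar := by
    intro a hLa
    have hbound : ∀ x : G, ‖a - α x a‖ ≤ ℓ x := by
      intro x
      by_cases hx : x = 1
      · simpa [hx, hα_one] using hℓ_nonneg x
      · have h1 : ENNReal.ofReal (‖α x a - a‖ / ℓ x) ≤ 1 := by
          refine le_trans ?_ hLa
          rw [hL]
          exact le_iSup₂ (f := fun (x : G) (_ : x ∈ {x : G | x ≠ 1}) =>
            ENNReal.ofReal (‖α x a - a‖ / ℓ x)) x hx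
        have hℓpos : 0 < ℓ x :=
          lt_of_le_of_ne (hℓ_nonneg x) (fun h => hx ((hℓ_zero x).mp h.symm))
        rw [ENNReal.ofReal_le_one] at h1
        have := (div_le_one hℓpos).mp h1
        rwa [norm_sub_rev] at this
    have hα_int : Integrable (fun x => α x a) haar :=
      (hα_cont a).integrable_of_hasCompactSupport
        (isCompact_univ.of_isClosed_subset (isClosed_tsupport _) (Set.subset_univ _))
    have heq : a - η a • (1 : A) = ∫ x, (a - α x a) ∂haar := by
      rw [integral_sub (integrable_const a) hα_int, integral_const, probReal_univ,
        one_smul, hη]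
    rw [heq]
    calc ‖∫ x, (a - α x a) ∂haar‖ ≤ ∫ x, ‖a - α x a‖ ∂haar :=
          norm_integral_le_integral_norm _
      _ ≤ ∫ x, ℓ x ∂haar :=
          integral_mono ((integrable_const a).sub hα_int).norm hℓ_int hbound
  have key2 : ∀ φ : A →L[ℂ] ℂ, ‖φ‖ = 1 → φ 1 = 1 → ∀ a : A, L a ≤ 1 →
      ‖φ a - η a‖ ≤ ∫ x, ℓ x ∂haar := by
    intro φ hφn hφ1 a h2
    have heq : φ a - η a = φ (a - η a • (1 : A)) := by
      rw [map_sub, _root_.map_smul, hφ1, smul_eq_mul, mul_one]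
    rw [heq]
    calc ‖φ (a - η a • (1 : A))‖ ≤ ‖φ‖ * ‖a - η a • (1 : A)‖ := φ.le_opNorm _
      _ = ‖a - η a • (1 : A)‖ := by rw [hφn, one_mul]
      _ ≤ _ := key a h2
  have part1 : ∀ φ : A →L[ℂ] ℂ, ‖φ‖ = 1 → φ 1 = 1 →
      ρ φ η ≤ ENNReal.ofReal (∫ x, ℓ x ∂haar) := by
    intro φ hφn hφ1
    rw [hρ]
    refine iSup₂_le fun a ha => ?_
    rw [← enorm_eq_nnnorm, ← ofReal_norm]
    exact ENNReal.ofReal_le_ofReal (key2 φ hφn hφ1 a ha.2)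
  refine ⟨part1, fun φ ψ hφn hφ1 hψn hψ1 => ?_⟩
  rw [hρ]
  refine iSup₂_le fun a ha => ?_
  rw [← enorm_eq_nnnorm, ← ofReal_norm]
  refine ENNReal.ofReal_le_ofReal ?_
  calc ‖φ a - ψ a‖ ≤ ‖φ a - η a‖ + ‖η a - ψ a‖ := norm_sub_le_norm_sub_add_norm_sub _ _ _
    _ ≤ (∫ x, ℓ x ∂haar) + (∫ x, ℓ x ∂haar) := by
        refine add_le_add (key2 φ hφn hφ1 a ha.2) ?_
        rw [norm_sub_rev]
        exact key2 ψ hψn hψ1 a ha.2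
    _ = 2 * ∫ x, ℓ x ∂haar := by ring
end

section
/- Let H and K be nonzero complex Hilbert spaces, let F₁, …, Fₙ be bounded self-adjoint operators on K satisfying F_j² = 1 for each j and F_jF_k = −F_kF_j for j ≠ k, and let b₁, …, bₙ be bounded operators on H. Let T = Σ_j b_j ⊗ F_j, acting on the Hilbert space tensor product H ⊗ K. Then ‖T‖ ≥ ‖b_j‖ for each j. -/
open scoped ENNReal NNReal Topology

/- STATEMENT 19 (from section 4): `H`, `K` nonzero complex Hilbert spaces,
`F₁, …, Fₙ` bounded self-adjoint operators on `K` with `Fⱼ² = 1` and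
`FⱼFₖ = -FₖFⱼ` for `j ≠ k`, and `b₁, …, bₙ` bounded operators on `H`.  The
Hilbert space tensor product `H ⊗ K` is encoded as a Hilbert space `W`
together with a bilinear map `tmul` whose inner ℂ products multiply and whose
range spans a dense subspace; `T = Σⱼ bⱼ ⊗ Fⱼ`.  Then `‖T‖ ≥ ‖bⱼ‖` for each
`j`. -/
theorem statement19
    {H K W : Type*}
    [NormedAddCommGroup H] [InnerProductSpace ℂ H] [CompleteSpace H] [Nontrivial H]
    [NormedAddCommGroup K] [InnerProductSpace ℂ K] [CompleteSpace K] [Nontrivial K]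
    [NormedAddCommGroup W] [InnerProductSpace ℂ W] [CompleteSpace W]
    (tmul : H →ₗ[ℂ] K →ₗ[ℂ] W)
    (htmul_inner : ∀ (x x' : H) (y y' : K),
      (inner ℂ (tmul x y) (tmul x' y') : ℂ) = (inner ℂ x x' : ℂ) * (inner ℂ y y' : ℂ))
    (hdense : Dense
      ((Submodule.span ℂ (Set.range fun p : H × K => tmul p.1 p.2) : Submodule ℂ W) : Set W))
    (n : ℕ) (F : Fin n → K →L[ℂ] K) (b : Fin n → H →L[ℂ] H)
    (hF_sa : ∀ j, IsSelfAdjoint (F j))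
    (hF_sq : ∀ j, (F j).comp (F j) = ContinuousLinearMap.id ℂ K)
    (hF_anti : ∀ j k, j ≠ k → (F j).comp (F k) = -((F k).comp (F j)))
    (T : W →L[ℂ] W)
    (hT : ∀ (x : H) (y : K), T (tmul x y) = ∑ j, tmul (b j x) (F j y)) :
    ∀ j, ‖b j‖ ≤ ‖T‖ := by
  intro j
  -- norm of an elementary tensor
  have hnorm : ∀ (x : H) (y : K), ‖tmul x y‖ = ‖x‖ * ‖y‖ := by
    intro x y
    have h := htmul_inner x x y y
    rw [inner_self_eq_norm_sq_to_K, inner_self_eq_norm_sq_to_K,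
      inner_self_eq_norm_sq_to_K] at h
    have h2 : ‖tmul x y‖ ^ 2 = ‖x‖ ^ 2 * ‖y‖ ^ 2 := by exact_mod_cast h
    rw [← mul_pow] at h2
    rw [← Real.sqrt_sq (norm_nonneg (tmul x y)), h2,
      Real.sqrt_sq (by positivity)]
  -- self-adjointness as a statement about inner ℂ products
  have hsa : ∀ (k : Fin n) (y y' : K), (inner ℂ (F k y) y' : ℂ) = inner ℂ y (F k y') := by
    intro k y y'
    have h1 : ContinuousLinearMap.adjoint (F k) = F k := hF_sa k
    conv_lhs => rw [← h1]
    exact ContinuousLinearMap.adjoint_inner_left _ _ _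
  -- F k is an isometry
  have hFnorm : ∀ (k : Fin n) (y : K), ‖F k y‖ = ‖y‖ := by
    intro k y
    have h : (inner ℂ (F k y) (F k y) : ℂ) = inner ℂ y y := by
      rw [hsa]
      have : F k (F k y) = y := by
        have := congrArg (fun A : K →L[ℂ] K => A y) (hF_sq k)
        simpa using this
      rw [this]
    rw [inner_self_eq_norm_sq_to_K, inner_self_eq_norm_sq_to_K] at h
    have h2 : ‖F k y‖ ^ 2 = ‖y‖ ^ 2 := by exact_mod_cast h
    rw [← Real.sqrt_sq (norm_nonneg (F k y)), h2, Real.sqrt_sq (norm_nonneg y)]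
  -- key identity
  have key : ∀ (x : H) (y : K),
      (inner ℂ (tmul (b j x) y) (T (tmul x (F j y))) : ℂ)
        + inner ℂ (tmul (b j x) (F j y)) (T (tmul x y))
      = 2 * inner ℂ (b j x) (b j x) * (inner ℂ y y : ℂ) := by
    intro x y
    rw [hT x (F j y), hT x y, inner_sum, inner_sum, ← Finset.sum_add_distrib]
    have hterm : ∀ k : Fin n,
        (inner ℂ (tmul (b j x) y) (tmul (b k x) (F k (F j y))) : ℂ)
          + inner ℂ (tmul (b j x) (F j y)) (tmul (b k x) (F k y))
        = (inner ℂ (b j x) (b k x) : ℂ)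
            * ((inner ℂ y (F k (F j y)) : ℂ) + (inner ℂ y (F j (F k y)) : ℂ)) := by
      intro k
      rw [htmul_inner, htmul_inner, hsa j y (F k y)]
      ring
    calc (∑ k, ((inner ℂ (tmul (b j x) y) (tmul (b k x) (F k (F j y))) : ℂ)
          + inner ℂ (tmul (b j x) (F j y)) (tmul (b k x) (F k y))))
        = ∑ k, (inner ℂ (b j x) (b k x) : ℂ)
            * ((inner ℂ y (F k (F j y)) : ℂ) + (inner ℂ y (F j (F k y)) : ℂ)) := by
          exact Finset.sum_congr rfl fun k _ => hterm k
      _ = 2 * inner ℂ (b j x) (b j x) * (inner ℂ y y : ℂ) := by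
          rw [Finset.sum_eq_single j]
          · have h1 : F j (F j y) = y := by
              have := congrArg (fun A : K →L[ℂ] K => A y) (hF_sq j)
              simpa using this
            rw [h1]; ring
          · intro k _ hkj
            have h1 : F k (F j y) = -(F j (F k y)) := by
              have := congrArg (fun A : K →L[ℂ] K => A y) (hF_anti k j hkj)
              simpa using this
            rw [h1, inner_neg_right]
            ring
          · intro h; exact absurd (Finset.mem_univ j) h
  -- pick a unit vector in K
  obtain ⟨y₀, hy₀⟩ := exists_ne (0 : K)
  set y : K := ‖y₀‖⁻¹ • y₀ with hy_def
  have hy1 : ‖y‖ = 1 := by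
    rw [hy_def, norm_smul, norm_inv, norm_norm,
      inv_mul_cancel₀ (norm_ne_zero_iff.mpr hy₀)]
  -- main bound
  apply ContinuousLinearMap.opNorm_le_bound _ (norm_nonneg T)
  intro x
  have hkey := key x y
  -- the norm of the key quantity
  have hre : 2 * ‖b j x‖ ^ 2 * ‖y‖ ^ 2
      = ‖((inner ℂ (tmul (b j x) y) (T (tmul x (F j y))) : ℂ)
        + inner ℂ (tmul (b j x) (F j y)) (T (tmul x y)))‖ := by
    rw [hkey, inner_self_eq_norm_sq_to_K, inner_self_eq_norm_sq_to_K,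
      norm_mul, norm_mul, norm_pow, norm_pow]
    simp [RCLike.norm_ofReal, abs_norm]
    try ring
  have habs : 2 * ‖b j x‖ ^ 2 * ‖y‖ ^ 2
      ≤ ‖tmul (b j x) y‖ * ‖T (tmul x (F j y))‖
        + ‖tmul (b j x) (F j y)‖ * ‖T (tmul x y)‖ := by
    rw [hre]
    calc ‖((inner ℂ (tmul (b j x) y) (T (tmul x (F j y))) : ℂ)
          + inner ℂ (tmul (b j x) (F j y)) (T (tmul x y)))‖
        ≤ ‖(inner ℂ (tmul (b j x) y) (T (tmul x (F j y))) : ℂ)‖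
          + ‖(inner ℂ (tmul (b j x) (F j y)) (T (tmul x y)) : ℂ)‖ := norm_add_le _ _
      _ ≤ ‖tmul (b j x) y‖ * ‖T (tmul x (F j y))‖
          + ‖tmul (b j x) (F j y)‖ * ‖T (tmul x y)‖ := by
          gcongr <;> exact norm_inner_le_norm _ _
  have hb1 : ‖T (tmul x (F j y))‖ ≤ ‖T‖ * (‖x‖ * ‖y‖) := by
    calc ‖T (tmul x (F j y))‖ ≤ ‖T‖ * ‖tmul x (F j y)‖ := T.le_opNorm _
      _ = ‖T‖ * (‖x‖ * ‖y‖) := by rw [hnorm, hFnorm]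
  have hb2 : ‖T (tmul x y)‖ ≤ ‖T‖ * (‖x‖ * ‖y‖) := by
    calc ‖T (tmul x y)‖ ≤ ‖T‖ * ‖tmul x y‖ := T.le_opNorm _
      _ = ‖T‖ * (‖x‖ * ‖y‖) := by rw [hnorm]
  rw [hnorm, hnorm, hFnorm] at habs
  rw [hy1] at habs hb1 hb2
  simp only [mul_one, one_pow] at habs hb1 hb2
  -- habs : 2 * ‖b j x‖ ^ 2 ≤ ‖b j x‖ * ‖T (..)‖ + ‖b j x‖ * ‖T (..)‖
  have hfin : 2 * ‖b j x‖ ^ 2 ≤ 2 * (‖b j x‖ * (‖T‖ * ‖x‖)) := by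
    calc 2 * ‖b j x‖ ^ 2 ≤ ‖b j x‖ * ‖T (tmul x (F j y))‖
          + ‖b j x‖ * ‖T (tmul x y)‖ := habs
      _ ≤ ‖b j x‖ * (‖T‖ * ‖x‖) + ‖b j x‖ * (‖T‖ * ‖x‖) := by
          gcongr <;> first | exact hb1 | exact hb2 | positivity
      _ = 2 * (‖b j x‖ * (‖T‖ * ‖x‖)) := by ring
  by_cases hz : ‖b j x‖ = 0
  · rw [hz]; positivity
  · have hpos : 0 < ‖b j x‖ := lt_of_le_of_ne (norm_nonneg _) (Ne.symm hz)
    nlinarith [hfin]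
end
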